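/- arXiv:2504.19573 — 6 statements merged into one kernel-verified Lean document; each statement's English description precedes it below -/
import Mathlib

section
/- Suppose λ ≥ 1 is real and y is a solution of the system of three Schrödinger equations with y'(0) = 0 and y(x) → 0 as x → +∞. Then y(x) = 0 for all x > 0; i.e., the system has no bound state with frequency λ ≥ 1. -/
open MeasureTheory Set Filter

noncomputable section

private lemma mono_glue {f : ℝ → ℝ} {a c b : ℝ} (hac : a ≤ c) (hcb : c ≤ b)
    (h1 : MonotoneOn f (Icc a c)) (h2 : MonotoneOn f (Icc c b)) :
    MonotoneOn f (Icc a b) := by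
  intro x hx y hy hxy
  rcases le_total y c with hyc | hyc
  · exact h1 ⟨hx.1, hxy.trans hyc⟩ ⟨hy.1, hyc⟩ hxy
  · rcases le_total x c with hxc | hxc
    · exact le_trans (h1 ⟨hx.1, hxc⟩ ⟨hac, le_rfl⟩ hxc) (h2 ⟨le_rfl, hcb⟩ ⟨hyc, hy.2⟩ hyc)
    · exact h2 ⟨hxc, hx.2⟩ ⟨hyc, hy.2⟩ hxy

private lemma mono_except (s : Finset ℝ) :
    ∀ (a b : ℝ) (f f' : ℝ → ℝ), ContinuousOn f (Icc a b) →
      (∀ x ∈ Ioo a b, x ∉ (s : Set ℝ) → HasDerivAt f (f' x) x) →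
      (∀ x ∈ Ioo a b, x ∉ (s : Set ℝ) → 0 ≤ f' x) →
      MonotoneOn f (Icc a b) := by
  classical
  induction s using Finset.induction_on with
  | empty =>
    intro a b f f' hc hd h0
    apply monotoneOn_of_hasDerivWithinAt_nonneg (convex_Icc a b) hc (f' := f')
    · intro x hx
      rw [interior_Icc] at hx
      exact (hd x hx (by simp)).hasDerivWithinAt
    · intro x hx
      rw [interior_Icc] at hx
      exact h0 x hx (by simp)
  | @insert c t hct ih =>
    intro a b f f' hc hd h0
    by_cases hcab : c ∈ Ioo a b
    · have h1 : MonotoneOn f (Icc a c) := by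
        refine ih a c f f' (hc.mono (Icc_subset_Icc le_rfl hcab.2.le)) ?_ ?_
        · intro x hx hxs
          refine hd x ⟨hx.1, hx.2.trans hcab.2⟩ ?_
          simp only [Finset.coe_insert, Set.mem_insert_iff, not_or]
          exact ⟨ne_of_lt hx.2, hxs⟩
        · intro x hx hxs
          refine h0 x ⟨hx.1, hx.2.trans hcab.2⟩ ?_
          simp only [Finset.coe_insert, Set.mem_insert_iff, not_or]
          exact ⟨ne_of_lt hx.2, hxs⟩
      have h2 : MonotoneOn f (Icc c b) := by
        refine ih c b f f' (hc.mono (Icc_subset_Icc hcab.1.le le_rfl)) ?_ ?_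
        · intro x hx hxs
          refine hd x ⟨hcab.1.trans hx.1, hx.2⟩ ?_
          simp only [Finset.coe_insert, Set.mem_insert_iff, not_or]
          exact ⟨ne_of_gt hx.1, hxs⟩
        · intro x hx hxs
          refine h0 x ⟨hcab.1.trans hx.1, hx.2⟩ ?_
          simp only [Finset.coe_insert, Set.mem_insert_iff, not_or]
          exact ⟨ne_of_gt hx.1, hxs⟩
      exact mono_glue hcab.1.le hcab.2.le h1 h2
    · refine ih a b f f' hc ?_ ?_
      · intro x hx hxs
        refine hd x hx ?_
        simp only [Finset.coe_insert, Set.mem_insert_iff, not_or]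
        exact ⟨fun h => hcab (h ▸ hx), hxs⟩
      · intro x hx hxs
        refine h0 x hx ?_
        simp only [Finset.coe_insert, Set.mem_insert_iff, not_or]
        exact ⟨fun h => hcab (h ▸ hx), hxs⟩

private lemma const_except (s : Finset ℝ) (a b : ℝ) (f f' : ℝ → ℝ)
    (hc : ContinuousOn f (Icc a b))
    (hd : ∀ x ∈ Ioo a b, x ∉ (s : Set ℝ) → HasDerivAt f (f' x) x)
    (h0 : ∀ x ∈ Ioo a b, x ∉ (s : Set ℝ) → f' x = 0) :
    ∀ x ∈ Icc a b, f x = f a := by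
  intro x hx
  have hab : a ≤ b := le_trans hx.1 hx.2
  have ha : a ∈ Icc a b := ⟨le_rfl, hab⟩
  have hm := mono_except s a b f f' hc hd (fun x hx hxs => (h0 x hx hxs).ge)
  have hm' := mono_except s a b (fun t => -f t) (fun t => -f' t) hc.neg
      (fun x hx hxs => (hd x hx hxs).neg) (fun x hx hxs => by simp [h0 x hx hxs])
  have e1 := hm ha hx hx.1
  have e2 := hm' ha hx hx.1
  simp only [neg_le_neg_iff] at e2
  linarith

private lemma no_escape {u p : ℝ → ℝ} {M r : ℝ} (hr : 0 < r)
    (hc : ContinuousOn u (Ici M))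
    (hd : ∀ x ∈ Ioi M, HasDerivAt u (p x) x)
    (hlow : ∀ x ∈ Ici M, r ≤ p x)
    (hu : Tendsto u atTop (nhds 0)) : False := by
  have key : ∀ T, M ≤ T → u M + r * (T - M) ≤ u T := by
    intro T hT
    have hmono : MonotoneOn (fun x => u x - r * x) (Icc M T) := by
      apply monotoneOn_of_hasDerivWithinAt_nonneg (convex_Icc M T)
          (f' := fun x => p x - r)
      · exact (hc.mono Icc_subset_Ici_self).sub
          (continuous_const.mul continuous_id).continuousOn
      · intro x hx
        rw [interior_Icc] at hx
        exact ((hd x hx.1).sub (by simpa using (hasDerivAt_id x).const_mul r)).hasDerivWithinAt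
      · intro x hx
        rw [interior_Icc] at hx
        have := hlow x hx.1.le
        linarith
    have h := hmono ⟨le_rfl, hT⟩ ⟨hT, le_rfl⟩ hT
    simp only at h
    linarith
  have h1 : ∀ᶠ T in atTop, u T < 1 := hu.eventually (gt_mem_nhds one_pos)
  obtain ⟨N, hN⟩ := eventually_atTop.mp h1
  set T := max N (M + (2 + |u M|) / r) with hT
  have hpos : 0 ≤ (2 + |u M|) / r := by positivity
  have hTM : M ≤ T := le_trans (by linarith) (le_max_right _ _)
  have h2 := key T hTM
  have h3 : M + (2 + |u M|) / r ≤ T := le_max_right _ _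
  have h4 : (2 + |u M|) ≤ r * (T - M) := by
    have h' : (2 + |u M|) / r ≤ T - M := by linarith
    calc (2 + |u M|) = (2 + |u M|) / r * r := by field_simp
      _ ≤ (T - M) * r := by nlinarith
      _ = r * (T - M) := mul_comm _ _
  have h5 := hN T (le_max_left _ _)
  have h6 := neg_abs_le (u M)
  linarith

private lemma cs3 {a b c x y z B : ℝ} (hB : 0 ≤ B) (ha : |a| ≤ B) (hb : |b| ≤ B)
    (hc : |c| ≤ B) : (a*x + b*y + c*z)^2 ≤ 3 * B^2 * (x^2 + y^2 + z^2) := by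
  have ha2 : a^2 ≤ B^2 := by nlinarith [sq_abs a, abs_nonneg a]
  have hb2 : b^2 ≤ B^2 := by nlinarith [sq_abs b, abs_nonneg b]
  have hc2 : c^2 ≤ B^2 := by nlinarith [sq_abs c, abs_nonneg c]
  have key : (a*x + b*y + c*z)^2 ≤ (a^2 + b^2 + c^2) * (x^2 + y^2 + z^2) := by
    nlinarith [sq_nonneg (a*y - b*x), sq_nonneg (a*z - c*x), sq_nonneg (b*z - c*y)]
  nlinarith [sq_nonneg x, sq_nonneg y, sq_nonneg z]

private lemma step2 (K b : ℝ) (g G : ℝ → ℝ) (E : Finset ℝ) (hb : 0 < b)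
    (hc : ContinuousOn g (Icc 0 b))
    (hgd : ∀ x ∈ Ioo 0 b, x ∉ (E : Set ℝ) → HasDerivAt g (G x) x)
    (hpos : ∀ x ∈ Ioo 0 b, x ∉ (E : Set ℝ) → 0 ≤ K * g x + G x)
    (hgb : g b = 0) (hg0 : ∀ x ∈ Icc 0 b, 0 ≤ g x) :
    ∀ x ∈ Icc 0 b, g x = 0 := by
  have hmono : MonotoneOn (fun t => Real.exp (K*t) * g t) (Icc 0 b) := by
    apply mono_except E 0 b _ (fun x => Real.exp (K*x) * (K * g x + G x))
    · exact ((Real.continuous_exp.comp (continuous_const.mul continuous_id)).continuousOn).mul hc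
    · intro x hx hxE
      have he : HasDerivAt (fun t => Real.exp (K*t)) (Real.exp (K*x) * K) x := by
        simpa [Function.comp_def] using (Real.hasDerivAt_exp (K*x)).comp x ((hasDerivAt_id x).const_mul K)
      have h := he.mul (hgd x hx hxE)
      refine h.congr_deriv ?_
      ring
    · intro x hx hxE
      exact mul_nonneg (Real.exp_pos _).le (hpos x hx hxE)
  intro x hx
  have h1 := hmono hx ⟨hb.le, le_rfl⟩ hx.2
  simp only [hgb, mul_zero] at h1
  have h2 : 0 ≤ Real.exp (K*x) * g x := mul_nonneg (Real.exp_pos _).le (hg0 x hx)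
  have h3 : Real.exp (K*x) * g x = 0 := le_antisymm h1 h2
  exact (mul_eq_zero.mp h3).resolve_left (Real.exp_pos (K*x)).ne'

set_option maxHeartbeats 1600000 in
/-- No bound state with frequency `λ ≥ 1`:  if `y` is a (real, C¹) solution of the
system of three 1D Schrödinger equations `-y'' + V(x) y = λ y` on `(0,∞)`
(the equation holding away from the finitely many discontinuity points of the
coefficients), where `V` is a 3×3 real symmetric piecewise smooth matrix function
with `V(x) = diag(0,1,1)` for `x > L`, satisfying the boundary condition
`y'(0) = 0` and the decay condition `y(x) → 0` as `x → +∞`, and if `λ ≥ 1`,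
then `y(x) = 0` for all `x > 0`. -/
theorem no_bound_state_frequency_ge_one
    (L lam : ℝ) (hL : 0 < L) (hlam : 1 ≤ lam)
    (V : ℝ → Fin 3 → Fin 3 → ℝ)
    -- V is piecewise smooth: smooth away from a finite set and (locally) bounded
    (EV : Finset ℝ)
    (hVsmooth : ∀ x ∉ (EV : Set ℝ), ContDiffAt ℝ (⊤ : ℕ∞) V x)
    (CV : ℝ) (hVbdd : ∀ x ∈ Set.Icc (0 : ℝ) L, ∀ i j, |V x i j| ≤ CV)
    -- V is symmetric
    (hVsymm : ∀ x i j, V x i j = V x j i)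
    -- V(x) = diag(0,1,1) for x > L
    (hVL : ∀ x > L, ∀ i j, V x i j = if i = j then (![0, 1, 1] : Fin 3 → ℝ) i else 0)
    -- y is a C¹ solution on [0,∞), twice differentiable and satisfying the
    -- equation away from a finite set
    (y y' : ℝ → Fin 3 → ℝ)
    (hy : ∀ x ∈ Set.Ici (0 : ℝ), HasDerivWithinAt y (y' x) (Set.Ici 0) x)
    (hy' : ContinuousOn y' (Set.Ici 0))
    (E : Finset ℝ)
    (heq : ∀ x ∈ Set.Ioi (0 : ℝ), x ∉ (E : Set ℝ) →
      HasDerivAt y' (fun i => (∑ j, V x i j * y x j) - lam * y x i) x)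
    -- boundary condition y'(0) = 0
    (hbc : y' 0 = 0)
    -- decay: y(x) → 0 as x → +∞
    (hdecay : Filter.Tendsto y Filter.atTop (nhds 0)) :
    ∀ x > 0, y x = 0 := by
  classical
  obtain ⟨b, hbdef⟩ : ∃ b : ℝ, b = L + 1 := ⟨_, rfl⟩
  have hLb : L < b := by rw [hbdef]; linarith
  have hb0 : (0:ℝ) < b := by linarith
  have hd3 : ∀ k : Fin 3, (![0,1,1] : Fin 3 → ℝ) k - lam ≤ 0 := by
    intro k
    fin_cases k <;> simp <;> linarith
  -- basic facts about y
  have hyc : ContinuousOn y (Ici 0) := fun x hx => (hy x hx).continuousWithinAt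
  have hyd : ∀ x : ℝ, 0 < x → HasDerivAt y (y' x) x := fun x hx =>
    (hy x hx.le).hasDerivAt (Ici_mem_nhds hx)
  have hydi : ∀ (x : ℝ), 0 < x → ∀ i, HasDerivAt (fun t => y t i) (y' x i) x := by
    intro x hx i
    have h := ((ContinuousLinearMap.proj (R := ℝ) (φ := fun _ : Fin 3 => ℝ) i).hasFDerivAt.comp x
      (hyd x hx).hasFDerivAt).hasDerivAt
    simpa [Function.comp_def] using h
  have hyci : ∀ i : Fin 3, ContinuousOn (fun t => y t i) (Ici 0) := fun i =>
    (continuous_apply i).comp_continuousOn hyc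
  have hpci : ∀ i : Fin 3, ContinuousOn (fun t => y' t i) (Ici 0) := fun i =>
    (continuous_apply i).comp_continuousOn hy'
  have hui : ∀ i : Fin 3, Tendsto (fun t => y t i) atTop (nhds 0) := by
    intro i
    have := ((continuous_apply i).tendsto (0 : Fin 3 → ℝ)).comp hdecay
    simpa [Function.comp_def] using this
  obtain ⟨w, hwdef⟩ : ∃ w : ℝ → Fin 3 → ℝ,
      w = fun t i => (∑ j, V t i j * y t j) - lam * y t i := ⟨_, rfl⟩
  have hpdi : ∀ (x : ℝ), 0 < x → x ∉ (E : Set ℝ) → ∀ i,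
      HasDerivAt (fun t => y' t i) (w x i) x := by
    intro x hx hxE i
    have h := ((ContinuousLinearMap.proj (R := ℝ) (φ := fun _ : Fin 3 => ℝ) i).hasFDerivAt.comp x
      (heq x hx hxE).hasFDerivAt).hasDerivAt
    simp only [hwdef]
    simpa [Function.comp_def] using h
  have hW : ∀ (x : ℝ), L < x → ∀ i, w x i = ((![0,1,1] : Fin 3 → ℝ) i - lam) * y x i := by
    intro x hx i
    have hs : (∑ j, V x i j * y x j) = (![0,1,1] : Fin 3 → ℝ) i * y x i := by
      rw [Fin.sum_univ_three, hVL x hx i 0, hVL x hx i 1, hVL x hx i 2]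
      fin_cases i <;> simp
    simp only [hwdef]
    rw [hs]; ring
  -- Step 1: y and y' vanish beyond L
  have step1 : ∀ (x : ℝ), L < x → ∀ i, y x i = 0 ∧ y' x i = 0 := by
    have main : ∀ i : Fin 3, (∀ x : ℝ, L < x → y' x i = 0) ∧ (∀ x : ℝ, L < x → y x i = 0) := by
      intro i
      obtain ⟨ν, hνdef⟩ : ∃ ν : ℝ, ν = (![0,1,1] : Fin 3 → ℝ) i - lam := ⟨_, rfl⟩
      have hν : ν ≤ 0 := by rw [hνdef]; exact hd3 i
      obtain ⟨Egy, hEdef⟩ : ∃ Egy : ℝ → ℝ,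
          Egy = fun t => (y' t i)^2 - ν * (y t i)^2 := ⟨_, rfl⟩
      have hEd : ∀ (x : ℝ), L < x → x ∉ (E : Set ℝ) → HasDerivAt Egy 0 x := by
        intro x hx hxE
        have hx0 : (0:ℝ) < x := lt_trans hL hx
        have h1 := hydi x hx0 i
        have h2 := hpdi x hx0 hxE i
        rw [hW x hx i, ← hνdef] at h2
        have h := (h2.pow 2).sub ((h1.pow 2).const_mul ν)
        rw [hEdef]
        refine h.congr_deriv ?_
        ring
      have hEcont : ContinuousOn Egy (Ici 0) := by
        rw [hEdef]
        exact ((hpci i).pow 2).sub (continuousOn_const.mul ((hyci i).pow 2))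
      have hEconst : ∀ (x : ℝ), L < x → Egy x = Egy b := by
        intro x hx
        have hpL : L < min x b := lt_min hx hLb
        have hp0 : (0:ℝ) < min x b := lt_trans hL hpL
        have hsub : Icc (min x b) (max x b) ⊆ Ici 0 := fun t ht => le_trans hp0.le ht.1
        have hcw := const_except E (min x b) (max x b) Egy (fun _ => 0) (hEcont.mono hsub)
          (fun t ht htE => hEd t (lt_trans hpL ht.1) htE) (fun _ _ _ => rfl)
        have hx1 : x ∈ Icc (min x b) (max x b) := ⟨min_le_left _ _, le_max_left _ _⟩
        have hb1 : b ∈ Icc (min x b) (max x b) := ⟨min_le_right _ _, le_max_right _ _⟩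
        rw [hcw x hx1, hcw b hb1]
      have hc0 : 0 ≤ Egy b := by
        simp only [hEdef]
        nlinarith [sq_nonneg (y' b i), sq_nonneg (y b i)]
      have hczero : Egy b = 0 := by
        by_contra hne
        have hcpos : 0 < Egy b := lt_of_le_of_ne hc0 (Ne.symm hne)
        have husq : Tendsto (fun t => -ν * (y t i * y t i)) atTop (nhds 0) := by
          have := ((hui i).mul (hui i)).const_mul (-ν)
          simpa using this
        have hev : ∀ᶠ t in atTop, -ν * (y t i * y t i) < Egy b / 2 :=
          husq.eventually (gt_mem_nhds (by linarith))
        obtain ⟨M0, hM0⟩ := eventually_atTop.mp hev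
        obtain ⟨M, hM⟩ : ∃ M : ℝ, M = max M0 b := ⟨_, rfl⟩
        have hM1 : M0 ≤ M := by rw [hM]; exact le_max_left _ _
        have hM2 : b ≤ M := by rw [hM]; exact le_max_right _ _
        have hMb : L < M := lt_of_lt_of_le hLb hM2
        have hM0' : (0:ℝ) < M := lt_trans hL hMb
        have hsq : ∀ (t : ℝ), M ≤ t → Egy b / 2 ≤ (y' t i)^2 := by
          intro t ht
          have h1 := hEconst t (lt_of_lt_of_le hMb ht)
          have h2 := hM0 t (le_trans hM1 ht)
          have e1 : Egy t = y' t i ^ 2 - ν * y t i ^ 2 := by rw [hEdef]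
          nlinarith [h1, h2, e1]
        obtain ⟨r, hr⟩ : ∃ r : ℝ, r = Real.sqrt (Egy b / 2) := ⟨_, rfl⟩
        have hrpos : 0 < r := by rw [hr]; exact Real.sqrt_pos.mpr (by linarith)
        have hr2 : r^2 = Egy b / 2 := by rw [hr]; exact Real.sq_sqrt (by linarith)
        have hpne : ∀ (t : ℝ), M ≤ t → y' t i ≠ 0 := by
          intro t ht h
          have := hsq t ht
          rw [h] at this
          nlinarith
        have hcp : ∀ (t : ℝ), M ≤ t → ContinuousOn (fun s => y' s i) (Icc M t) :=
          fun t _ => (hpci i).mono (fun s hs => le_trans hM0'.le hs.1)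
        rcases lt_or_gt_of_ne (hpne M le_rfl) with hMneg | hMpos
        · have hneg : ∀ (t : ℝ), M ≤ t → y' t i < 0 := by
            intro t ht
            rcases lt_or_gt_of_ne (hpne t ht) with h | h
            · exact h
            · exfalso
              obtain ⟨z, hz, hz0⟩ := intermediate_value_Icc ht (hcp t ht)
                (⟨hMneg.le, h.le⟩ : (0:ℝ) ∈ Icc (y' M i) (y' t i))
              exact hpne z hz.1 hz0
          have hlow : ∀ t ∈ Ici M, r ≤ -(y' t i) := by
            intro t ht
            have h1 := hsq t ht
            have h2 := hneg t ht
            nlinarith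
          exact no_escape hrpos (((hyci i).mono (Ici_subset_Ici.mpr hM0'.le)).neg)
            (fun t ht => (hydi t (lt_trans hM0' ht) i).neg) hlow (by simpa [Pi.neg_def] using (hui i).neg)
        · have hpos : ∀ (t : ℝ), M ≤ t → 0 < y' t i := by
            intro t ht
            rcases lt_or_gt_of_ne (hpne t ht) with h | h
            · exfalso
              obtain ⟨z, hz, hz0⟩ := intermediate_value_Icc' ht (hcp t ht)
                (⟨h.le, hMpos.le⟩ : (0:ℝ) ∈ Icc (y' t i) (y' M i))
              exact hpne z hz.1 hz0
            · exact h
          have hlow : ∀ t ∈ Ici M, r ≤ y' t i := by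
            intro t ht
            have h1 := hsq t ht
            have h2 := hpos t ht
            nlinarith
          exact no_escape hrpos ((hyci i).mono (Ici_subset_Ici.mpr hM0'.le))
            (fun t ht => hydi t (lt_trans hM0' ht) i) hlow (hui i)
      have hp0 : ∀ (x : ℝ), L < x → y' x i = 0 := by
        intro x hx
        have h1 := hEconst x hx
        rw [hczero] at h1
        simp only [hEdef] at h1
        have h2 : (y' x i)^2 = 0 := by nlinarith [sq_nonneg (y x i), sq_nonneg (y' x i)]
        exact pow_eq_zero_iff (by norm_num : (2:ℕ) ≠ 0) |>.mp h2
      have hu0 : ∀ (x : ℝ), L < x → y x i = 0 := by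
        intro x hx
        have hx0 : (0:ℝ) < x := lt_trans hL hx
        have hconst : ∀ T, x ≤ T → y T i = y x i := by
          intro T hT
          exact const_except E x T (fun t => y t i) (fun t => y' t i)
            ((hyci i).mono (fun t ht => le_trans hx0.le ht.1))
            (fun t ht _ => hydi t (lt_trans hx0 ht.1) i)
            (fun t ht _ => hp0 t (lt_trans hx ht.1)) T ⟨hT, le_rfl⟩
        have hEv : (fun T => y T i) =ᶠ[atTop] (fun _ => y x i) :=
          eventually_atTop.mpr ⟨x, fun T hT => hconst T hT⟩
        have h2 : Tendsto (fun _ : ℝ => y x i) atTop (nhds 0) :=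
          Tendsto.congr' hEv (hui i)
        exact (tendsto_nhds_unique h2 tendsto_const_nhds).symm
      exact ⟨hp0, hu0⟩
    intro x hx i
    exact ⟨(main i).2 x hx, (main i).1 x hx⟩
  -- Step 2: backward uniqueness on (0, b]
  obtain ⟨C, hCdef⟩ : ∃ C : ℝ, C = max CV 1 := ⟨_, rfl⟩
  have hC1 : (1:ℝ) ≤ C := by rw [hCdef]; exact le_max_right _ _
  have hVC : ∀ (x : ℝ), 0 < x → x < b → ∀ i j, |V x i j| ≤ C := by
    intro x hx hxb i j
    rcases le_or_gt x L with h | h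
    · rw [hCdef]; exact le_trans (hVbdd x ⟨hx.le, h⟩ i j) (le_max_left _ _)
    · rw [hVL x h i j]
      refine le_trans ?_ hC1
      fin_cases i <;> fin_cases j <;> norm_num [Matrix.cons_val_zero, Matrix.cons_val_one, Matrix.head_cons, Fin.ext_iff]
  obtain ⟨B, hBdef⟩ : ∃ B : ℝ, B = C + lam := ⟨_, rfl⟩
  have hB0 : (0:ℝ) ≤ B := by rw [hBdef]; linarith
  obtain ⟨K, hKdef⟩ : ∃ K : ℝ, K = 1 + 9 * B^2 := ⟨_, rfl⟩
  obtain ⟨g, hgdef⟩ : ∃ g : ℝ → ℝ, g = fun t => (y t 0)^2 + (y t 1)^2 + (y t 2)^2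
      + (y' t 0)^2 + (y' t 1)^2 + (y' t 2)^2 := ⟨_, rfl⟩
  obtain ⟨G, hGdef⟩ : ∃ G : ℝ → ℝ,
      G = fun t => 2*(y t 0)*(y' t 0) + 2*(y t 1)*(y' t 1) + 2*(y t 2)*(y' t 2)
      + 2*(y' t 0)*(w t 0) + 2*(y' t 1)*(w t 1) + 2*(y' t 2)*(w t 2) := ⟨_, rfl⟩
  have hg0 : ∀ x ∈ Icc (0:ℝ) b, (0:ℝ) ≤ g x := by
    intro x _
    simp only [hgdef]
    positivity
  have hgb : g b = 0 := by
    have h0 := step1 b hLb 0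
    have h1 := step1 b hLb 1
    have h2 := step1 b hLb 2
    simp only [hgdef]
    rw [h0.1, h1.1, h2.1, h0.2, h1.2, h2.2]
    norm_num
  have hgc : ContinuousOn g (Icc 0 b) := by
    have sub : Icc (0:ℝ) b ⊆ Ici 0 := Icc_subset_Ici_self
    rw [hgdef]
    exact ((((((((hyci 0).mono sub).pow 2).add (((hyci 1).mono sub).pow 2)).add
      (((hyci 2).mono sub).pow 2)).add (((hpci 0).mono sub).pow 2)).add
      (((hpci 1).mono sub).pow 2)).add (((hpci 2).mono sub).pow 2))
  have hgd : ∀ x ∈ Ioo (0:ℝ) b, x ∉ (E : Set ℝ) → HasDerivAt g (G x) x := by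
    intro x hx hxE
    have h0 := hydi x hx.1 0
    have h1 := hydi x hx.1 1
    have h2 := hydi x hx.1 2
    have k0 := hpdi x hx.1 hxE 0
    have k1 := hpdi x hx.1 hxE 1
    have k2 := hpdi x hx.1 hxE 2
    have h := ((((((h0.pow 2).add (h1.pow 2)).add (h2.pow 2)).add (k0.pow 2)).add
      (k1.pow 2)).add (k2.pow 2))
    simp only [hgdef, hGdef]
    refine h.congr_deriv ?_
    ring
  have hKg : ∀ x ∈ Ioo (0:ℝ) b, x ∉ (E : Set ℝ) → 0 ≤ K * g x + G x := by
    intro x hx hxE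
    have hV : ∀ i j, |V x i j| ≤ C := hVC x hx.1 hx.2
    have hdiag : ∀ i, |V x i i + (1 - lam)| ≤ B := by
      intro i
      have h1 := hV i i
      have h2 := abs_add_le (V x i i) (1 - lam)
      have h3 : |1 - lam| = lam - 1 := by
        rw [abs_of_nonpos (by linarith)]; ring
      rw [hBdef]
      linarith
    have hoff : ∀ i j, |V x i j| ≤ B := by
      intro i j
      rw [hBdef]
      linarith [hV i j]
    have hq0 : y x 0 + w x 0 = (V x 0 0 + (1 - lam)) * y x 0 + V x 0 1 * y x 1
        + V x 0 2 * y x 2 := by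
      simp only [hwdef, Fin.sum_univ_three]; ring
    have hq1 : y x 1 + w x 1 = V x 1 0 * y x 0 + (V x 1 1 + (1 - lam)) * y x 1
        + V x 1 2 * y x 2 := by
      simp only [hwdef, Fin.sum_univ_three]; ring
    have hq2 : y x 2 + w x 2 = V x 2 0 * y x 0 + V x 2 1 * y x 1
        + (V x 2 2 + (1 - lam)) * y x 2 := by
      simp only [hwdef, Fin.sum_univ_three]; ring
    have S0 : (y x 0 + w x 0)^2 ≤ 3*B^2*((y x 0)^2 + (y x 1)^2 + (y x 2)^2) := by
      rw [hq0]; exact cs3 hB0 (hdiag 0) (hoff 0 1) (hoff 0 2)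
    have S1 : (y x 1 + w x 1)^2 ≤ 3*B^2*((y x 0)^2 + (y x 1)^2 + (y x 2)^2) := by
      rw [hq1]; exact cs3 hB0 (hoff 1 0) (hdiag 1) (hoff 1 2)
    have S2 : (y x 2 + w x 2)^2 ≤ 3*B^2*((y x 0)^2 + (y x 1)^2 + (y x 2)^2) := by
      rw [hq2]; exact cs3 hB0 (hoff 2 0) (hoff 2 1) (hdiag 2)
    simp only [hgdef, hGdef, hKdef]
    nlinarith [S0, S1, S2, sq_nonneg (y' x 0 + (y x 0 + w x 0)),
      sq_nonneg (y' x 1 + (y x 1 + w x 1)), sq_nonneg (y' x 2 + (y x 2 + w x 2)),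
      mul_nonneg (sq_nonneg B) (sq_nonneg (y' x 0)),
      mul_nonneg (sq_nonneg B) (sq_nonneg (y' x 1)),
      mul_nonneg (sq_nonneg B) (sq_nonneg (y' x 2)),
      sq_nonneg (y x 0), sq_nonneg (y x 1), sq_nonneg (y x 2)]
  have main2 := step2 K b g G E hb0 hgc hgd hKg hgb hg0
  intro x hx
  rcases lt_or_ge L x with h | h
  · funext i
    simpa using (step1 x h i).1
  · have hxb : x ∈ Icc (0:ℝ) b := ⟨hx.le, by rw [hbdef]; linarith⟩
    have hgx := main2 x hxb
    simp only [hgdef] at hgx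
    have e0 : y x 0 = 0 := by
      have hq : (y x 0)^2 = 0 := by
        nlinarith [sq_nonneg (y x 0), sq_nonneg (y x 1), sq_nonneg (y x 2),
          sq_nonneg (y' x 0), sq_nonneg (y' x 1), sq_nonneg (y' x 2)]
      exact pow_eq_zero_iff (by norm_num : (2:ℕ) ≠ 0) |>.mp hq
    have e1 : y x 1 = 0 := by
      have hq : (y x 1)^2 = 0 := by
        nlinarith [sq_nonneg (y x 0), sq_nonneg (y x 1), sq_nonneg (y x 2),
          sq_nonneg (y' x 0), sq_nonneg (y' x 1), sq_nonneg (y' x 2)]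
      exact pow_eq_zero_iff (by norm_num : (2:ℕ) ≠ 0) |>.mp hq
    have e2 : y x 2 = 0 := by
      have hq : (y x 2)^2 = 0 := by
        nlinarith [sq_nonneg (y x 0), sq_nonneg (y x 1), sq_nonneg (y x 2),
          sq_nonneg (y' x 0), sq_nonneg (y' x 1), sq_nonneg (y' x 2)]
      exact pow_eq_zero_iff (by norm_num : (2:ℕ) ≠ 0) |>.mp hq
    funext i
    fin_cases i <;> simp [e0, e1, e2]


end
end

section
/- Let λ ∈ (0,1) be real and suppose y = (y0,y1,y2)ᵀ is a solution of the system of three Schrödinger equations with y'(0) = 0 such that for all x > L one has y0(x) = K0 e^{i√λ x}, y1(x) = K1 e^{−√(1−λ)x}, and y2(x) = K2 e^{−√(1−λ)x} for constants K0, K1, K2. Then K0 = 0. In other words, there are no outgoing (resonant-state) solutions with real frequency λ ∈ (0,1) and K0 ≠ 0; any such solution decays as x → +∞ and is therefore a BIC (or zero). -/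
open MeasureTheory Set Filter

noncomputable section

private lemma aux_im_conj_mul_self (a : ℂ) : ((starRingEnd ℂ) a * a).im = 0 := by
  simp [Complex.mul_im]; ring

private lemma aux_antisymm (a b : ℂ) :
    ((starRingEnd ℂ) a * b).im = -(((starRingEnd ℂ) b * a).im) := by
  simp [Complex.mul_im]; ring

private lemma aux_real_mul_im (r : ℝ) (z : ℂ) : ((r : ℂ) * z).im = r * z.im := by
  simp [Complex.mul_im]

private lemma aux_hasDerivAt_ofReal (x : ℝ) : HasDerivAt (fun t : ℝ => (t : ℂ)) 1 x := by
  exact Complex.ofRealCLM.hasDerivAt (x := x)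

private lemma aux_component {f : ℝ → Fin 3 → ℂ} {f' : Fin 3 → ℂ} {x : ℝ}
    (h : HasDerivAt f f' x) (i : Fin 3) : HasDerivAt (fun t => f t i) (f' i) x := by
  have := (ContinuousLinearMap.proj (R := ℝ) (φ := fun _ : Fin 3 => ℂ)
      i).hasFDerivAt.comp_hasDerivAt x h
  exact this

private lemma aux_conj_deriv {f : ℝ → ℂ} {f' : ℂ} {x : ℝ} (h : HasDerivAt f f' x) :
    HasDerivAt (fun t => (starRingEnd ℂ) (f t)) ((starRingEnd ℂ) f') x := by
  have := (Complex.conjCLE.toContinuousLinearMap.hasFDerivAt (x := f x)).comp_hasDerivAt x h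
  exact this

/-- No outgoing (resonant-state) solution with real frequency `λ ∈ (0,1)`.
Let `λ ∈ (0,1)` be real and let `y = (y0,y1,y2)ᵀ` be a C¹ solution of the
system of three Schrödinger equations `-y'' + V(x) y = λ y` on `(0,∞)` (the
equation holding away from finitely many points) with `y'(0) = 0`, where `V` is
real symmetric, piecewise smooth, and `V(x) = diag(0,1,1)` for `x > L`.  If for
all `x > L` one has `y0(x) = K₀ e^{i√λ x}`, `y1(x) = K₁ e^{-√(1-λ)x}` and
`y2(x) = K₂ e^{-√(1-λ)x}`, then `K₀ = 0`; in particular `y` decays as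
`x → +∞`, so it is a BIC (or identically zero). -/
theorem no_real_frequency_resonant_state
    (L lam : ℝ) (hL : 0 < L) (hlam : lam ∈ Set.Ioo (0 : ℝ) 1)
    (V : ℝ → Fin 3 → Fin 3 → ℝ)
    (EV : Finset ℝ)
    (hVsmooth : ∀ x ∉ (EV : Set ℝ), ContDiffAt ℝ (⊤ : ℕ∞) V x)
    (CV : ℝ) (hVbdd : ∀ x ∈ Set.Icc (0 : ℝ) L, ∀ i j, |V x i j| ≤ CV)
    (hVsymm : ∀ x i j, V x i j = V x j i)
    (hVL : ∀ x > L, ∀ i j, V x i j = if i = j then (![0, 1, 1] : Fin 3 → ℝ) i else 0)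
    (y y' : ℝ → Fin 3 → ℂ)
    (hy : ∀ x ∈ Set.Ici (0 : ℝ), HasDerivWithinAt y (y' x) (Set.Ici 0) x)
    (hy' : ContinuousOn y' (Set.Ici 0))
    (E : Finset ℝ)
    (heq : ∀ x ∈ Set.Ioi (0 : ℝ), x ∉ (E : Set ℝ) →
      HasDerivAt y' (fun i => (∑ j, (V x i j : ℂ) * y x j) - (lam : ℂ) * y x i) x)
    (hbc : y' 0 = 0)
    (K0 K1 K2 : ℂ)
    (hy0 : ∀ x > L, y x 0 = K0 * Complex.exp (Complex.I * (Real.sqrt lam : ℂ) * (x : ℂ)))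
    (hy1 : ∀ x > L, y x 1 = K1 * Complex.exp (-((Real.sqrt (1 - lam) : ℂ) * (x : ℂ))))
    (hy2 : ∀ x > L, y x 2 = K2 * Complex.exp (-((Real.sqrt (1 - lam) : ℂ) * (x : ℂ)))) :
    K0 = 0 ∧ Filter.Tendsto y Filter.atTop (nhds 0) := by
  obtain ⟨hlam0, hlam1⟩ := hlam
  set s : ℝ := Real.sqrt lam with hs_def
  set t : ℝ := Real.sqrt (1 - lam) with ht_def
  have hs : 0 < s := Real.sqrt_pos.mpr hlam0
  have ht : 0 < t := Real.sqrt_pos.mpr (by linarith)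
  set b : ℝ := L + 1 with hb_def
  have hbL : L < b := by simp [hb_def]
  have hb0 : (0 : ℝ) < b := by linarith
  -- continuity of y
  have hycont : ContinuousOn y (Set.Ici 0) := fun x hx => (hy x hx).continuousWithinAt
  -- the flux function F
  set F : ℝ → ℝ := fun u => (∑ i, (starRingEnd ℂ) (y u i) * y' u i).im with hF_def
  have hFcont : ContinuousOn F (Set.Icc 0 b) := by
    apply Complex.continuous_im.comp_continuousOn
    have hG : ContinuousOn (fun u => ∑ i, (starRingEnd ℂ) (y u i) * y' u i) (Set.Ici (0 : ℝ)) := by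
      apply continuousOn_finset_sum
      intro i _
      exact (continuous_star.comp_continuousOn
          ((continuous_apply i).comp_continuousOn hycont)).mul
        ((continuous_apply i).comp_continuousOn hy')
    exact hG.mono Set.Icc_subset_Ici_self
  -- F has zero derivative off E
  have hFderiv : ∀ x ∈ Set.Ioo (0 : ℝ) b \ (E : Set ℝ), HasDerivAt F 0 x := by
    rintro x ⟨hx, hxE⟩
    have hx0 : 0 < x := hx.1
    have hyD : HasDerivAt y (y' x) x := (hy x hx0.le).hasDerivAt (Ici_mem_nhds hx0)
    have hyD' := heq x hx0 hxE
    set w : Fin 3 → ℂ := fun i => (∑ j, (V x i j : ℂ) * y x j) - (lam : ℂ) * y x i with hw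
    have hsum : HasDerivAt (fun u => ∑ i, (starRingEnd ℂ) (y u i) * y' u i)
        (∑ i, ((starRingEnd ℂ) (y' x i) * y' x i + (starRingEnd ℂ) (y x i) * w i)) x := by
      apply HasDerivAt.fun_sum
      intro i _
      exact (aux_conj_deriv (aux_component hyD i)).mul (aux_component hyD' i)
    have him := Complex.imCLM.hasFDerivAt.comp_hasDerivAt x hsum
    have hD : (∑ i, ((starRingEnd ℂ) (y' x i) * y' x i + (starRingEnd ℂ) (y x i) * w i)).im
        = ∑ i, ∑ j, V x i j * ((starRingEnd ℂ) (y x i) * y x j).im := by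
      rw [Complex.im_sum]
      refine Finset.sum_congr rfl fun i _ => ?_
      rw [Complex.add_im, aux_im_conj_mul_self, zero_add, hw]
      rw [mul_sub, Complex.sub_im]
      have h2 : ((starRingEnd ℂ) (y x i) * ((lam : ℂ) * y x i)).im = 0 := by
        rw [mul_left_comm, aux_real_mul_im, aux_im_conj_mul_self, mul_zero]
      rw [h2, sub_zero, Finset.mul_sum, Complex.im_sum]
      refine Finset.sum_congr rfl fun j _ => ?_
      rw [mul_left_comm, aux_real_mul_im]
    have hzero : (∑ i, ∑ j, V x i j * ((starRingEnd ℂ) (y x i) * y x j).im) = 0 := by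
      have hneg : (∑ i, ∑ j, V x i j * ((starRingEnd ℂ) (y x i) * y x j).im)
          = -(∑ i, ∑ j, V x i j * ((starRingEnd ℂ) (y x i) * y x j).im) := by
        nth_rewrite 1 [Finset.sum_comm]
        rw [← Finset.sum_neg_distrib]
        refine Finset.sum_congr rfl fun i _ => ?_
        rw [← Finset.sum_neg_distrib]
        refine Finset.sum_congr rfl fun j _ => ?_
        rw [hVsymm x j i, aux_antisymm]
        ring
      linarith
    have heq0 : Complex.imCLM
        (∑ i, ((starRingEnd ℂ) (y' x i) * y' x i + (starRingEnd ℂ) (y x i) * w i)) = 0 := by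
      show (∑ i, ((starRingEnd ℂ) (y' x i) * y' x i + (starRingEnd ℂ) (y x i) * w i)).im = 0
      rw [hD]; exact hzero
    rw [heq0] at him
    exact him
  -- constancy of F via FTC-2 off a countable set
  have hFconst : F b = F 0 := by
    have hint := MeasureTheory.integral_eq_of_hasDerivAt_off_countable_of_le
      F (fun _ => (0 : ℝ)) hb0.le E.countable_toSet hFcont hFderiv intervalIntegrable_const
    have h0 : (∫ x in (0:ℝ)..b, (0:ℝ)) = 0 := by simp
    rw [h0] at hint
    linarith
  have hF0 : F 0 = 0 := by simp [hF_def, hbc]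
  -- compute the derivatives at b from the explicit formulas
  have hyDb : HasDerivAt y (y' b) b := (hy b hb0.le).hasDerivAt (Ici_mem_nhds hb0)
  have hmem : Set.Ioi L ∈ nhds b := isOpen_Ioi.mem_nhds hbL
  -- component 0
  have hf0 : HasDerivAt (fun u : ℝ => K0 * Complex.exp (Complex.I * (s : ℂ) * (u : ℂ)))
      (K0 * (Complex.exp (Complex.I * (s : ℂ) * (b : ℂ)) * (Complex.I * (s : ℂ)))) b := by
    have h1 : HasDerivAt (fun u : ℝ => Complex.I * (s : ℂ) * (u : ℂ))
        (Complex.I * (s : ℂ)) b := by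
      simpa using (aux_hasDerivAt_ofReal b).const_mul (Complex.I * (s : ℂ))
    exact h1.cexp.const_mul K0
  have hval0 : y' b 0
      = K0 * (Complex.exp (Complex.I * (s : ℂ) * (b : ℂ)) * (Complex.I * (s : ℂ))) := by
    have hEq : (fun u => y u 0)
        =ᶠ[nhds b] (fun u : ℝ => K0 * Complex.exp (Complex.I * (s : ℂ) * (u : ℂ))) :=
      eventuallyEq_of_mem hmem (fun u hu => hy0 u hu)
    exact (aux_component hyDb 0).unique (hf0.congr_of_eventuallyEq hEq)
  -- components 1 and 2
  have hinner : HasDerivAt (fun u : ℝ => -((t : ℂ) * (u : ℂ))) (-(t : ℂ)) b := by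
    have h1 : HasDerivAt (fun u : ℝ => (t : ℂ) * (u : ℂ)) (t : ℂ) b := by
      simpa using (aux_hasDerivAt_ofReal b).const_mul ((t : ℂ))
    exact h1.neg
  have hf1 : HasDerivAt (fun u : ℝ => K1 * Complex.exp (-((t : ℂ) * (u : ℂ))))
      (K1 * (Complex.exp (-((t : ℂ) * (b : ℂ))) * (-(t : ℂ)))) b :=
    hinner.cexp.const_mul K1
  have hf2 : HasDerivAt (fun u : ℝ => K2 * Complex.exp (-((t : ℂ) * (u : ℂ))))
      (K2 * (Complex.exp (-((t : ℂ) * (b : ℂ))) * (-(t : ℂ)))) b :=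
    hinner.cexp.const_mul K2
  have hval1 : y' b 1 = K1 * (Complex.exp (-((t : ℂ) * (b : ℂ))) * (-(t : ℂ))) := by
    have hEq : (fun u => y u 1)
        =ᶠ[nhds b] (fun u : ℝ => K1 * Complex.exp (-((t : ℂ) * (u : ℂ)))) :=
      eventuallyEq_of_mem hmem (fun u hu => hy1 u hu)
    exact (aux_component hyDb 1).unique (hf1.congr_of_eventuallyEq hEq)
  have hval2 : y' b 2 = K2 * (Complex.exp (-((t : ℂ) * (b : ℂ))) * (-(t : ℂ))) := by
    have hEq : (fun u => y u 2)
        =ᶠ[nhds b] (fun u : ℝ => K2 * Complex.exp (-((t : ℂ) * (u : ℂ)))) :=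
      eventuallyEq_of_mem hmem (fun u hu => hy2 u hu)
    exact (aux_component hyDb 2).unique (hf2.congr_of_eventuallyEq hEq)
  -- compute F b
  have hee : Complex.exp (-(Complex.I * (s : ℂ) * (b : ℂ)))
      * Complex.exp (Complex.I * (s : ℂ) * (b : ℂ)) = 1 := by
    rw [← Complex.exp_add]; simp
  have hterm0 : ((starRingEnd ℂ) (y b 0) * y' b 0).im = Complex.normSq K0 * s := by
    rw [hy0 b hbL, hval0, map_mul]
    have hc : (starRingEnd ℂ) (Complex.exp (Complex.I * (s : ℂ) * (b : ℂ)))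
        = Complex.exp (-(Complex.I * (s : ℂ) * (b : ℂ))) := by
      rw [← Complex.exp_conj]
      congr 1
      simp [map_mul, Complex.conj_ofReal]
    rw [hc]
    have hkey : (starRingEnd ℂ) K0 * Complex.exp (-(Complex.I * (s : ℂ) * (b : ℂ)))
        * (K0 * (Complex.exp (Complex.I * (s : ℂ) * (b : ℂ)) * (Complex.I * (s : ℂ))))
        = ((Complex.normSq K0 : ℝ) : ℂ) * (Complex.I * (s : ℂ)) := by
      calc (starRingEnd ℂ) K0 * Complex.exp (-(Complex.I * (s : ℂ) * (b : ℂ)))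
          * (K0 * (Complex.exp (Complex.I * (s : ℂ) * (b : ℂ)) * (Complex.I * (s : ℂ))))
          = ((starRingEnd ℂ) K0 * K0)
            * ((Complex.exp (-(Complex.I * (s : ℂ) * (b : ℂ)))
                * Complex.exp (Complex.I * (s : ℂ) * (b : ℂ))) * (Complex.I * (s : ℂ))) := by
            ring
        _ = ((starRingEnd ℂ) K0 * K0) * (Complex.I * (s : ℂ)) := by rw [hee, one_mul]
        _ = ((Complex.normSq K0 : ℝ) : ℂ) * (Complex.I * (s : ℂ)) := by
            rw [← Complex.normSq_eq_conj_mul_self]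
    rw [hkey]
    simp [Complex.mul_im]
  have hre1 : Complex.exp (-((t : ℂ) * (b : ℂ))) = ((Real.exp (-(t * b)) : ℝ) : ℂ) := by
    rw [Complex.ofReal_exp]
    congr 1
    push_cast
    ring
  have hterm_decay : ∀ K : ℂ,
      ((starRingEnd ℂ) (K * Complex.exp (-((t : ℂ) * (b : ℂ))))
        * (K * (Complex.exp (-((t : ℂ) * (b : ℂ))) * (-(t : ℂ))))).im = 0 := by
    intro K
    rw [hre1, map_mul, Complex.conj_ofReal]
    have : (starRingEnd ℂ) K * ((Real.exp (-(t * b)) : ℝ) : ℂ)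
        * (K * (((Real.exp (-(t * b)) : ℝ) : ℂ) * (-(t : ℂ))))
        = ((Complex.normSq K : ℝ) : ℂ)
          * ((Real.exp (-(t * b)) * Real.exp (-(t * b)) * (-t) : ℝ) : ℂ) := by
      rw [Complex.normSq_eq_conj_mul_self]
      push_cast
      ring
    rw [this, ← Complex.ofReal_mul, Complex.ofReal_im]
  have hFb : F b = Complex.normSq K0 * s := by
    rw [hF_def]
    simp only [Fin.sum_univ_three]
    rw [Complex.add_im, Complex.add_im, hterm0]
    rw [hy1 b hbL, hval1, hy2 b hbL, hval2, hterm_decay K1, hterm_decay K2]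
    ring
  have hK0 : K0 = 0 := by
    have : Complex.normSq K0 * s = 0 := by rw [← hFb, hFconst, hF0]
    have hns : Complex.normSq K0 = 0 := by
      rcases mul_eq_zero.mp this with h | h
      · exact h
      · exact absurd h (ne_of_gt hs)
    exact Complex.normSq_eq_zero.mp hns
  refine ⟨hK0, ?_⟩
  rw [tendsto_pi_nhds]
  have hdecay : Tendsto (fun x : ℝ => Complex.exp (-((t : ℂ) * (x : ℂ)))) atTop (nhds 0) := by
    have h1 : Tendsto (fun x : ℝ => t * x) atTop atTop :=
      Tendsto.const_mul_atTop ht tendsto_id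
    have h2 : Tendsto (fun x : ℝ => Real.exp (-(t * x))) atTop (nhds 0) :=
      Real.tendsto_exp_neg_atTop_nhds_zero.comp h1
    have h3 : Tendsto (fun x : ℝ => ((Real.exp (-(t * x)) : ℝ) : ℂ)) atTop (nhds 0) :=
      (Complex.continuous_ofReal.tendsto 0).comp h2
    apply h3.congr
    intro x
    rw [Complex.ofReal_exp]
    congr 1
    push_cast
    ring
  intro i
  fin_cases i
  · -- component 0: eventually zero
    have : (fun x => y x 0) =ᶠ[atTop] (fun _ => (0 : ℂ)) := by
      filter_upwards [eventually_gt_atTop L] with x hx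
      rw [hy0 x hx, hK0, zero_mul]
    simpa using Tendsto.congr' this.symm tendsto_const_nhds
  · have h4 : Tendsto (fun x : ℝ => K1 * Complex.exp (-((t : ℂ) * (x : ℂ)))) atTop (nhds 0) := by
      have := hdecay.const_mul K1
      simpa using this
    have : (fun x : ℝ => K1 * Complex.exp (-((t : ℂ) * (x : ℂ)))) =ᶠ[atTop] (fun x => y x 1) := by
      filter_upwards [eventually_gt_atTop L] with x hx
      rw [hy1 x hx]
    simpa using Tendsto.congr' this h4
  · have h4 : Tendsto (fun x : ℝ => K2 * Complex.exp (-((t : ℂ) * (x : ℂ)))) atTop (nhds 0) := by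
      have := hdecay.const_mul K2
      simpa using this
    have : (fun x : ℝ => K2 * Complex.exp (-((t : ℂ) * (x : ℂ)))) =ᶠ[atTop] (fun x => y x 2) := by
      filter_upwards [eventually_gt_atTop L] with x hx
      rw [hy2 x hx]
    simpa using Tendsto.congr' this h4

end
end

section
/- Lemma 5.1 (solvability criterion): The boundary value problem BVP(y0) has a solution if and only if ⟨φ0, g0⟩ = 0, where φ0 is the scattering solution. -/
open MeasureTheory Set Filter

set_option maxHeartbeats 1600000

noncomputable section


/-- FTC allowing finitely many exceptional points where the derivative may fail. -/
theorem ftc_finset (E : Finset ℝ) : ∀ (a b : ℝ) (f f' : ℝ → ℝ), a ≤ b →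
    ContinuousOn f (Icc a b) →
    (∀ x ∈ Ioo a b, x ∉ (E : Set ℝ) → HasDerivAt f (f' x) x) →
    IntervalIntegrable f' volume a b →
    ∫ x in a..b, f' x = f b - f a := by
  induction E using Finset.strongInduction with
  | _ E ih =>
    intro a b f f' hab hcont hderiv hint
    by_cases hE : ∃ c ∈ E, c ∈ Ioo a b
    · obtain ⟨c, hcE, hc⟩ := hE
      have hsub1 : uIcc a c ⊆ uIcc a b := by
        rw [uIcc_of_le hab, uIcc_of_le hc.1.le]
        exact Icc_subset_Icc le_rfl hc.2.le
      have hsub2 : uIcc c b ⊆ uIcc a b := by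
        rw [uIcc_of_le hab, uIcc_of_le hc.2.le]
        exact Icc_subset_Icc hc.1.le le_rfl
      have h1 : ∫ x in a..c, f' x = f c - f a := by
        refine ih (E.erase c) (Finset.erase_ssubset hcE) a c f f' hc.1.le
          (hcont.mono (Icc_subset_Icc le_rfl hc.2.le)) ?_ (hint.mono_set hsub1)
        intro x hx hxE
        refine hderiv x ⟨hx.1, hx.2.trans hc.2⟩ ?_
        intro hxE'
        exact hxE (Finset.mem_coe.2 (Finset.mem_erase.2 ⟨ne_of_lt hx.2, hxE'⟩))
      have h2 : ∫ x in c..b, f' x = f b - f c := by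
        refine ih (E.erase c) (Finset.erase_ssubset hcE) c b f f' hc.2.le
          (hcont.mono (Icc_subset_Icc hc.1.le le_rfl)) ?_ (hint.mono_set hsub2)
        intro x hx hxE
        refine hderiv x ⟨hc.1.trans hx.1, hx.2⟩ ?_
        intro hxE'
        exact hxE (Finset.mem_coe.2 (Finset.mem_erase.2 ⟨(ne_of_lt hx.1).symm, hxE'⟩))
      rw [← intervalIntegral.integral_add_adjacent_intervals (hint.mono_set hsub1)
        (hint.mono_set hsub2), h1, h2]
      ring
    · push_neg at hE
      exact intervalIntegral.integral_eq_sub_of_hasDeriv_right_of_le hab hcont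
        (fun x hx => (hderiv x hx (hE x · hx)).hasDerivWithinAt) hint

lemma hasDerivWithinAt_singleton' {E : Type*} [NormedAddCommGroup E] [NormedSpace ℝ E]
    (f : ℝ → E) (x : ℝ) (y : E) : HasDerivWithinAt f y {x} x := by
  rw [hasDerivWithinAt_iff_hasFDerivWithinAt]
  simp only [HasFDerivWithinAt, nhdsWithin_singleton, hasFDerivAtFilter_iff_isLittleO,
    Asymptotics.isLittleO_pure]
  simp

/-- Global existence for an ODE with a globally Lipschitz (in space) right hand side,
continuous in time, on a compact time interval. -/
theorem exists_global_solution {E : Type*} [NormedAddCommGroup E] [NormedSpace ℝ E]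
    [CompleteSpace E] (v : ℝ → E → E) (a b : ℝ) (hab : a ≤ b) (K : NNReal)
    (hlip : ∀ t ∈ Icc a b, LipschitzWith K (v t))
    (hcont : ∀ x, ContinuousOn (fun t => v t x) (Icc a b)) (x₀ : E) :
    ∃ f : ℝ → E, f a = x₀ ∧ ∀ t ∈ Icc a b, HasDerivWithinAt f (v t (f t)) (Icc a b) t := by
  obtain ⟨n, hn⟩ := exists_nat_gt (2 * (K : ℝ) * (b - a))
  set N : ℕ := n + 1 with hN
  set δ : ℝ := (b - a) / N with hδ
  have hNpos : (0 : ℝ) < N := by positivity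
  have hδ0 : 0 ≤ δ := div_nonneg (by linarith) hNpos.le
  have hKδ : (K : ℝ) * δ ≤ 1 / 2 := by
    have h2 : (K : ℝ) * (b - a) ≤ (N : ℝ) / 2 := by
      have : (n : ℝ) ≤ N := by push_cast [hN]; linarith
      nlinarith [K.coe_nonneg]
    calc (K : ℝ) * ((b - a) / N) = (K * (b - a)) / N := by ring
      _ ≤ ((N : ℝ) / 2) / N := (div_le_div_iff_of_pos_right hNpos).2 h2
      _ = 1 / 2 := by field_simp
  have hNδ : a + N * δ = b := by rw [hδ]; field_simp; ring
  have key : ∀ k : ℕ, k ≤ N → ∃ f : ℝ → E, f a = x₀ ∧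
      ∀ t ∈ Icc a (a + k * δ), HasDerivWithinAt f (v t (f t)) (Icc a (a + k * δ)) t := by
    intro k
    induction k with
    | zero =>
      intro _
      refine ⟨fun _ => x₀, rfl, fun t ht => ?_⟩
      simp only [Nat.cast_zero, zero_mul, add_zero, Icc_self, mem_singleton_iff] at ht ⊢
      subst ht
      exact hasDerivWithinAt_singleton' _ _ _
    | succ k ih =>
      intro hk1
      obtain ⟨f, hfa, hf⟩ := ih (le_of_lt (Nat.lt_of_succ_le hk1))
      set s : ℝ := a + k * δ with hs
      set s' : ℝ := a + (k + 1 : ℕ) * δ with hs'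
      have hss'' : s' = s + δ := by rw [hs, hs']; push_cast; ring
      have hss' : s ≤ s' := by rw [hss'']; linarith
      have has : a ≤ s := le_add_of_nonneg_right (mul_nonneg (Nat.cast_nonneg k) hδ0)
      have hs'b : s' ≤ b := by
        rw [← hNδ, hs']
        have : ((k + 1 : ℕ) : ℝ) ≤ (N : ℝ) := Nat.cast_le.2 hk1
        nlinarith
      have hsub : Icc s s' ⊆ Icc a b := Icc_subset_Icc has hs'b
      -- bound on ‖v t (f s)‖ over Icc a b
      obtain ⟨M0, hM0⟩ := isCompact_Icc.exists_bound_of_continuousOn (hcont (f s))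
      set M : ℝ := max M0 0 with hM
      have hMnn : 0 ≤ M := le_max_right _ _
      set R : ℝ := 2 * M * δ + 1 with hR
      have hRpos : 0 < R := by positivity
      set C : ℝ := M + K * R with hC
      have hCnn : 0 ≤ C := add_nonneg hMnn (mul_nonneg K.coe_nonneg hRpos.le)
      have hPL : IsPicardLindelof v (tmin := s) (tmax := s') ⟨s, le_rfl, hss'⟩ (f s)
          ⟨R, hRpos.le⟩ 0 ⟨C, hCnn⟩ K := by
        refine ⟨?_, ?_, ?_, ?_⟩
        · exact fun t ht => ((hlip t (hsub ht)).lipschitzOnWith)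
        · exact fun x _ => (hcont x).mono hsub
        · intro t ht x hx
          have h1 : ‖v t x - v t (f s)‖ ≤ (K : ℝ) * R := by
            have h2 := (hlip t (hsub ht)).dist_le_mul x (f s)
            simp only [dist_eq_norm] at h2
            exact h2.trans (mul_le_mul_of_nonneg_left (mem_closedBall_iff_norm.1 hx)
              K.coe_nonneg)
          have hsplit : v t x = (v t x - v t (f s)) + v t (f s) := by abel
          calc ‖v t x‖ = ‖(v t x - v t (f s)) + v t (f s)‖ := by rw [← hsplit]
            _ ≤ ‖v t x - v t (f s)‖ + ‖v t (f s)‖ := norm_add_le _ _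
            _ ≤ (K : ℝ) * R + M := add_le_add h1 ((hM0 t (hsub ht)).trans (le_max_left _ _))
            _ = C := by rw [hC]; ring
        · have hmax : max (s' - s) (s - s) = δ := by
            rw [hss'']; simp [hδ0]
          show C * max (s' - s) (s - s) ≤ R - 0
          rw [sub_zero, hmax, hC]
          have : (K : ℝ) * R * δ ≤ R / 2 := by
            calc (K : ℝ) * R * δ = ((K : ℝ) * δ) * R := by ring
              _ ≤ (1 / 2) * R := mul_le_mul_of_nonneg_right hKδ hRpos.le
              _ = R / 2 := by ring
          have hR2 : R / 2 = M * δ + 1 / 2 := by rw [hR]; ring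
          nlinarith [mul_nonneg hMnn hδ0]
      obtain ⟨g, hgs', hg⟩ := hPL.exists_eq_forall_mem_Icc_hasDerivWithinAt₀
      have hgs : g s = f s := hgs'
      refine ⟨fun t => if t ≤ s then f t else g t, by simp [has, hfa], ?_⟩
      intro t ht
      set h : ℝ → E := fun t => if t ≤ s then f t else g t with hh
      rcases lt_trichotomy t s with hts | hts | hts
      · -- t < s
        have h1 : HasDerivWithinAt f (v t (f t)) (Icc a s) t := hf t ⟨ht.1, hts.le⟩
        have hmem : Icc a s ∈ nhdsWithin t (Icc a s') := by
          refine mem_nhdsWithin.2 ⟨Iio s, isOpen_Iio, hts, fun y hy => ⟨hy.2.1, hy.1.le⟩⟩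
        have h2 : HasDerivWithinAt f (v t (f t)) (Icc a s') t := h1.mono_of_mem_nhdsWithin hmem
        have hev : h =ᶠ[nhdsWithin t (Icc a s')] f := by
          filter_upwards [mem_nhdsWithin_of_mem_nhds (Iio_mem_nhds hts)] with y hy
          simp [hh, (mem_Iio.1 hy).le]
        have hht : h t = f t := by simp [hh, hts.le]
        rw [hht]
        exact h2.congr_of_eventuallyEq hev hht
      · -- t = s
        have hht : h t = f t := by simp [hh, hts.le]
        have hfgt : f t = g t := by rw [hts]; exact hgs.symm
        have hleft : HasDerivWithinAt h (v t (h t)) (Icc a s) t := by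
          rw [hht]
          exact (hf t ⟨ht.1, hts.le⟩).congr (fun y hy => by simp [hh, hy.2]) hht
        have hright : HasDerivWithinAt h (v t (h t)) (Icc s s') t := by
          rw [hht, hfgt]
          have hhgt : h t = g t := hht.trans hfgt
          refine (hg t ⟨hts.ge, hts.le.trans hss'⟩).congr (fun y hy => ?_) hhgt
          by_cases hys : y ≤ s
          · have hy2 : y = s := le_antisymm hys hy.1
            simp [hh, hy2, hgs]
          · simp [hh, hys]
        have hu := hleft.union hright
        rwa [Icc_union_Icc_eq_Icc has hss'] at hu
      · -- t > s
        have h1 : HasDerivWithinAt g (v t (g t)) (Icc s s') t := hg t ⟨hts.le, ht.2⟩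
        have hmem : Icc s s' ∈ nhdsWithin t (Icc a s') := by
          refine mem_nhdsWithin.2 ⟨Ioi s, isOpen_Ioi, hts, fun y hy => ⟨hy.1.le, hy.2.2⟩⟩
        have h2 : HasDerivWithinAt g (v t (g t)) (Icc a s') t := h1.mono_of_mem_nhdsWithin hmem
        have hev : h =ᶠ[nhdsWithin t (Icc a s')] g := by
          filter_upwards [mem_nhdsWithin_of_mem_nhds (Ioi_mem_nhds hts)] with y hy
          simp [hh, not_le.2 (mem_Ioi.1 hy)]
        have hht : h t = g t := by simp [hh, not_le.2 hts]
        rw [hht]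
        exact h2.congr_of_eventuallyEq hev hht
  obtain ⟨f, hfa, hf⟩ := key N le_rfl
  rw [hNδ] at hf
  exact ⟨f, hfa, hf⟩

lemma measurable_of_continuousAt_compl_finite (f : ℝ → ℝ) (E : Finset ℝ)
    (h : ∀ x ∉ (E : Set ℝ), ContinuousAt f x) : Measurable f := by
  apply measurable_of_isOpen
  intro U hU
  have hEc : IsOpen ((E : Set ℝ)ᶜ) := (E.finite_toSet.isClosed).isOpen_compl
  have hco : ContinuousOn f ((E : Set ℝ)ᶜ) := fun x hx => (h x hx).continuousWithinAt
  have h1 : IsOpen ((E : Set ℝ)ᶜ ∩ f ⁻¹' U) := hco.isOpen_inter_preimage hEc hU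
  have h2 : f ⁻¹' U = ((E : Set ℝ)ᶜ ∩ f ⁻¹' U) ∪ ((E : Set ℝ) ∩ f ⁻¹' U) := by
    rw [← union_inter_distrib_right, compl_union_self, univ_inter]
  rw [h2]
  exact h1.measurableSet.union ((E.finite_toSet.inter_of_left _).measurableSet)

def IsSolBVP (d : ℝ → ℝ) (lam : ℝ) (g : ℝ → ℝ) (y y' : ℝ → ℝ) : Prop :=
  (∀ x ∈ Set.Ici (0 : ℝ), HasDerivWithinAt y (y' x) (Set.Ici 0) x) ∧
  ContinuousOn y' (Set.Ici 0) ∧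
  (∃ E : Finset ℝ, ∀ x ∈ Set.Ioi (0 : ℝ), x ∉ (E : Set ℝ) →
    HasDerivAt y' (d x * y x - lam * y x - g x) x) ∧
  y' 0 = 0 ∧
  Filter.Tendsto y Filter.atTop (nhds 0)

/-- Lemma 5.1 (solvability criterion).  Let `g0 ∈ L²(0,∞)` be real with
`g0(x) = 0` for `x > L`, let `d0` be real piecewise smooth with `d0(x) = 0` for
`x > L`, let `λ0 ∈ (0,1)`, and let `φ0` be the real scattering solution of
`-φ0'' + d0 φ0 = λ0 φ0` with `φ0'(0) = 0` and `φ0(x) = cos(√λ0 x + θ0/2)` for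
`x > L`.  Then the BVP `-y0'' + d0 y0 - λ0 y0 = g0`, `y0'(0) = 0`, `y0 → 0` at
`+∞` has a solution if and only if `⟨φ0, g0⟩ = 0`. -/
theorem lemma_5_1_solvability
    (L lam0 : ℝ) (hL : 0 < L) (hlam0 : lam0 ∈ Set.Ioo (0 : ℝ) 1)
    (d0 : ℝ → ℝ)
    (Ed : Finset ℝ)
    (hd0smooth : ∀ x ∉ (Ed : Set ℝ), ContDiffAt ℝ (⊤ : ℕ∞) d0 x)
    (Cd : ℝ) (hd0bdd : ∀ x, |d0 x| ≤ Cd)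
    (hd0L : ∀ x > L, d0 x = 0)
    (g0 : ℝ → ℝ)
    (hg0L2 : MeasureTheory.MemLp g0 2 (volume.restrict (Set.Ioi 0)))
    (hg0L : ∀ x > L, g0 x = 0)
    (Eg : Finset ℝ) (hg0cont : ∀ x ∉ (Eg : Set ℝ), ContinuousAt g0 x)
    (θ0 : ℝ) (φ0 φ0' : ℝ → ℝ)
    (hφ0 : ∀ x ∈ Set.Ici (0 : ℝ), HasDerivWithinAt φ0 (φ0' x) (Set.Ici 0) x)
    (hφ0c : ContinuousOn φ0' (Set.Ici 0))
    (hφ0eq : ∀ x ∈ Set.Ioi (0 : ℝ), x ∉ (Ed : Set ℝ) →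
      HasDerivAt φ0' (d0 x * φ0 x - lam0 * φ0 x) x)
    (hφ0bc : φ0' 0 = 0)
    (hφ0L : ∀ x > L, φ0 x = Real.cos (Real.sqrt lam0 * x + θ0 / 2)) :
    (∃ y0 y0' : ℝ → ℝ, IsSolBVP d0 lam0 g0 y0 y0') ↔
      ∫ x in Set.Ioi (0 : ℝ), φ0 x * g0 x = 0 := by
  obtain ⟨hlam, _⟩ := hlam0
  have φcont : ContinuousOn φ0 (Ici 0) := fun x hx => (hφ0 x hx).continuousWithinAt
  have φD : ∀ x, 0 < x → HasDerivAt φ0 (φ0' x) x :=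
    fun x hx => (hφ0 x hx.le).hasDerivAt (Ici_mem_nhds hx)
  -- integrability of g0 on bounded intervals
  have hg_int : ∀ T : ℝ, IntegrableOn g0 (Ioc 0 T) volume := by
    intro T
    have h1 : MemLp g0 2 ((volume.restrict (Ioi 0)).restrict (Ioc 0 T)) :=
      hg0L2.restrict _
    rw [Measure.restrict_restrict measurableSet_Ioc] at h1
    have h2 : Ioc (0:ℝ) T ∩ Ioi 0 = Ioc 0 T := by
      rw [inter_eq_left]; exact Ioc_subset_Ioi_self
    rw [h2] at h1
    have : IsFiniteMeasure (volume.restrict (Ioc (0:ℝ) T)) :=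
      ⟨by rw [Measure.restrict_apply_univ]; exact measure_Ioc_lt_top⟩
    exact h1.integrable (by norm_num)
  -- interval integrability of φ0 * g0
  have hφg_ii : ∀ T, 0 ≤ T → IntervalIntegrable (fun x => φ0 x * g0 x) volume 0 T := by
    intro T hT
    constructor
    · have hsub : Ioc (0:ℝ) T ⊆ Ici 0 := Ioc_subset_Icc_self.trans Icc_subset_Ici_self
      have hφm : AEStronglyMeasurable φ0 (volume.restrict (Ioc 0 T)) :=
        (φcont.mono hsub).aestronglyMeasurable measurableSet_Ioc
      obtain ⟨Cφ, hCφ⟩ := isCompact_Icc.exists_bound_of_continuousOn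
        (φcont.mono (Icc_subset_Ici_self : Icc (0:ℝ) T ⊆ Ici 0))
      refine (hg_int T).bdd_mul (c := Cφ) hφm ?_
      refine (ae_restrict_iff' measurableSet_Ioc).2 (ae_of_all _ fun x hx => ?_)
      exact hCφ x ⟨hx.1.le, hx.2⟩
    · rw [Ioc_eq_empty (by simpa using hT)]
      exact integrableOn_empty
  -- reduction of the half-line integral to an interval integral
  have hbridge : ∀ T, L ≤ T → ∫ x in Ioi (0:ℝ), φ0 x * g0 x = ∫ x in (0:ℝ)..T, φ0 x * g0 x := by
    intro T hT
    have hT0 : 0 ≤ T := le_trans hL.le hT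
    have hzero : ∀ x ∈ Ioi T, φ0 x * g0 x = 0 := fun x hx => by
      rw [hg0L x (lt_of_le_of_lt hT hx), mul_zero]
    have hsplit : Ioi (0:ℝ) = Ioc 0 T ∪ Ioi T := (Ioc_union_Ioi_eq_Ioi hT0).symm
    have hint1 : IntegrableOn (fun x => φ0 x * g0 x) (Ioc 0 T) volume := (hφg_ii T hT0).1
    have hint2 : IntegrableOn (fun x => φ0 x * g0 x) (Ioi T) volume := by
      refine (integrableOn_congr_fun hzero measurableSet_Ioi).2 ?_
      simp [integrableOn_const]
    rw [hsplit, setIntegral_union (Ioc_disjoint_Ioi le_rfl) measurableSet_Ioi hint1 hint2,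
      setIntegral_congr_fun measurableSet_Ioi hzero]
    simp [intervalIntegral.integral_of_le hT0]
  constructor
  · -- forward direction
    rintro ⟨y, y', hy1, hy2, ⟨Ey, hy3⟩, hy4, hy5⟩
    have ycont : ContinuousOn y (Ici 0) := fun x hx => (hy1 x hx).continuousWithinAt
    have hyD : ∀ x, 0 < x → HasDerivAt y (y' x) x :=
      fun x hx => (hy1 x hx.le).hasDerivAt (Ici_mem_nhds hx)
    set T : ℝ := L + 1 with hT
    have hT0 : (0:ℝ) < T := by linarith
    obtain ⟨c, hc0, hEc⟩ :
        ∃ c : ℝ, 0 ≤ c ∧ ∀ x, T ≤ x → lam0 * y x ^ 2 + y' x ^ 2 = c := by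
      refine ⟨lam0 * y T ^ 2 + y' T ^ 2, by positivity, fun x hx => ?_⟩
      have hcont : ContinuousOn (fun x => lam0 * y x ^ 2 + y' x ^ 2) (Icc T x) := by
        have hsub : Icc T x ⊆ Ici 0 := Icc_subset_Ici_self.trans (Ici_subset_Ici.2 hT0.le)
        exact (((ycont.mono hsub).pow 2).const_smul lam0).add ((hy2.mono hsub).pow 2)
      have hderiv : ∀ t ∈ Ioo T x, t ∉ (Ey : Set ℝ) →
          HasDerivAt (fun x => lam0 * y x ^ 2 + y' x ^ 2) 0 t := by
        intro t ht htE
        have htpos : (0:ℝ) < t := lt_trans hT0 ht.1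
        have htL : L < t := by have := ht.1; rw [hT] at this; linarith
        have h1 := ((hyD t htpos).pow 2).const_mul lam0
        have h2 := (hy3 t htpos htE).pow 2
        have h := h1.add h2
        refine h.congr_deriv ?_
        rw [hd0L t htL, hg0L t htL]
        ring
      have h := ftc_finset Ey T x (fun x => lam0 * y x ^ 2 + y' x ^ 2) (fun _ => 0) hx hcont
        hderiv intervalIntegrable_const
      simp only [intervalIntegral.integral_zero] at h
      linarith [h]
    -- the constant is zero
    have hceq : c = 0 := by
      by_contra hcne
      have hcpos : 0 < c := lt_of_le_of_ne hc0 (Ne.symm hcne)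
      set F : ℝ → ℝ := fun x => y x * y' x with hF
      -- |y'| ≤ √c on [T, ∞)
      have hy'bdd : ∀ x, T ≤ x → |y' x| ≤ Real.sqrt c := by
        intro x hx
        refine Real.abs_le_sqrt ?_
        have h1 : lam0 * y x ^ 2 + y' x ^ 2 = c := hEc x hx
        nlinarith [mul_nonneg hlam.le (sq_nonneg (y x))]
      -- F tends to zero
      have hFto : Tendsto F atTop (nhds 0) := by
        refine squeeze_zero_norm' (a := fun x => Real.sqrt c * |y x|) ?_ ?_
        · filter_upwards [eventually_ge_atTop T] with x hx
          rw [Real.norm_eq_abs, hF, abs_mul]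
          calc |y x| * |y' x| ≤ |y x| * Real.sqrt c :=
                mul_le_mul_of_nonneg_left (hy'bdd x hx) (abs_nonneg _)
            _ = Real.sqrt c * |y x| := mul_comm _ _
        · have := (hy5.abs).const_mul (Real.sqrt c)
          simpa using this
      -- eventually lam0 * y^2 < c / 4
      have hyto : Tendsto (fun x => lam0 * y x ^ 2) atTop (nhds 0) := by
        have := (hy5.mul hy5).const_mul lam0
        simpa [pow_two] using this
      have hev : ∀ᶠ x in atTop, lam0 * y x ^ 2 < c / 4 :=
        hyto.eventually_lt_const (by positivity)
      obtain ⟨T₁', hT₁'⟩ := (hev.and (eventually_ge_atTop T)).exists_forall_of_atTop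
      set T₁ : ℝ := max T₁' T with hT₁
      have hT₁T : T ≤ T₁ := le_max_right _ _
      have hT₁prop : ∀ x, T₁ ≤ x → lam0 * y x ^ 2 < c / 4 ∧ T ≤ x := by
        intro x hx
        exact hT₁' x (le_trans (le_max_left _ _) hx)
      -- growth of F
      have hFgrow : ∀ x, T₁ ≤ x → c / 2 * (x - T₁) ≤ F x - F T₁ := by
        intro x hx
        have hsub : Icc T₁ x ⊆ Ici 0 :=
          Icc_subset_Ici_self.trans (Ici_subset_Ici.2 (by linarith))
        have hcont : ContinuousOn F (Icc T₁ x) := (ycont.mono hsub).mul (hy2.mono hsub)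
        have hderiv : ∀ t ∈ Ioo T₁ x, t ∉ (Ey : Set ℝ) →
            HasDerivAt F (y' t ^ 2 - lam0 * y t ^ 2) t := by
          intro t ht htE
          have htT : T ≤ t := le_trans hT₁T ht.1.le
          have htpos : (0:ℝ) < t := lt_of_lt_of_le hT0 htT
          have htL : L < t := by rw [hT] at htT; linarith
          have h := (hyD t htpos).mul (hy3 t htpos htE)
          refine h.congr_deriv ?_
          rw [hd0L t htL, hg0L t htL]
          ring
        have hint : IntervalIntegrable (fun t => y' t ^ 2 - lam0 * y t ^ 2) volume T₁ x := by
          apply ContinuousOn.intervalIntegrable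
          have hsub' : uIcc T₁ x ⊆ Ici 0 := by
            rw [uIcc_of_le hx]; exact hsub
          exact ((hy2.mono hsub').pow 2).sub (((ycont.mono hsub').pow 2).const_smul lam0)
        have hftc := ftc_finset Ey T₁ x F _ hx hcont hderiv hint
        have hmono : ∫ t in T₁..x, (c / 2) ≤ ∫ t in T₁..x, (y' t ^ 2 - lam0 * y t ^ 2) := by
          refine intervalIntegral.integral_mono_on hx intervalIntegrable_const hint ?_
          intro t ht
          have h1 : lam0 * y t ^ 2 + y' t ^ 2 = c := hEc t (le_trans hT₁T ht.1)
          have h2 := (hT₁prop t ht.1).1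
          show c / 2 ≤ y' t ^ 2 - lam0 * y t ^ 2
          linarith
        rw [hftc, intervalIntegral.integral_const, smul_eq_mul] at hmono
        have hcomm : c / 2 * (x - T₁) = (x - T₁) * (c / 2) := by ring
        linarith
      -- contradiction
      have hev1 : ∀ᶠ x in atTop, |F x| < 1 := by
        have := hFto.abs
        simp only [abs_zero] at this
        exact this.eventually_lt_const one_pos
      have hev2 : ∀ᶠ x in atTop, 2 + |F T₁| ≤ c / 2 * (x - T₁) := by
        filter_upwards [eventually_ge_atTop ((2 + |F T₁|) / (c / 2) + T₁)] with x hx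
        have h01 : (2 + |F T₁|) / (c / 2) ≤ x - T₁ := by linarith
        have h02 := (div_le_iff₀ (by positivity : (0:ℝ) < c / 2)).1 h01
        rw [mul_comm]
        exact h02
      obtain ⟨x, hx0⟩ := ((hev1.and hev2).and (eventually_ge_atTop T₁)).exists
      obtain ⟨⟨hx1, hx2⟩, hx3⟩ := hx0
      have h4 := hFgrow x hx3
      have h5 := le_abs_self (F x)
      have h6 := neg_abs_le (F T₁)
      linarith
    -- hence y(T) = 0 and y'(T) = 0
    have h1TT : lam0 * y T ^ 2 + y' T ^ 2 = 0 := by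
      have h := hEc T le_rfl
      rw [hceq] at h
      exact h
    have hyT : y T = 0 := by
      have h2 : y T ^ 2 = 0 := by nlinarith [sq_nonneg (y T), sq_nonneg (y' T)]
      exact (pow_eq_zero_iff (by norm_num : (2:ℕ) ≠ 0)).1 h2
    have hy'T : y' T = 0 := by
      have h2 : y' T ^ 2 = 0 := by
        nlinarith [sq_nonneg (y T), sq_nonneg (y' T), mul_nonneg hlam.le (sq_nonneg (y T))]
      exact (pow_eq_zero_iff (by norm_num : (2:ℕ) ≠ 0)).1 h2
    -- Wronskian identity
    set W : ℝ → ℝ := fun x => φ0 x * y' x - φ0' x * y x with hW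
    have hWcont : ContinuousOn W (Icc 0 T) := by
      have hsub : Icc (0:ℝ) T ⊆ Ici 0 := Icc_subset_Ici_self
      exact ((φcont.mono hsub).mul (hy2.mono hsub)).sub ((hφ0c.mono hsub).mul (ycont.mono hsub))
    have hWderiv : ∀ t ∈ Ioo (0:ℝ) T, t ∉ ((Ey ∪ Ed : Finset ℝ) : Set ℝ) →
        HasDerivAt W (-(φ0 t * g0 t)) t := by
      intro t ht htE
      rw [Finset.coe_union, mem_union] at htE
      push_neg at htE
      have h1 := (φD t ht.1).mul (hy3 t ht.1 htE.1)
      have h2 := (hφ0eq t ht.1 htE.2).mul (hyD t ht.1)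
      have h := h1.sub h2
      refine h.congr_deriv ?_
      ring
    have hWint : IntervalIntegrable (fun t => -(φ0 t * g0 t)) volume 0 T :=
      (hφg_ii T hT0.le).neg
    have hftcW := ftc_finset (Ey ∪ Ed) 0 T W _ hT0.le hWcont hWderiv hWint
    have hWT : W T = 0 := by rw [hW]; simp [hyT, hy'T]
    have hW0 : W 0 = 0 := by rw [hW]; simp [hy4, hφ0bc]
    rw [hWT, hW0, sub_zero, intervalIntegral.integral_neg, neg_eq_zero] at hftcW
    rw [hbridge T (by rw [hT]; linarith)]
    exact hftcW
  · -- backward direction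
    intro horth
    have hsq : Real.sqrt lam0 ^ 2 = lam0 := Real.sq_sqrt hlam.le
    -- value of φ0' beyond L
    have hφ'val : ∀ x, L < x →
        φ0' x = -Real.sin (Real.sqrt lam0 * x + θ0 / 2) * Real.sqrt lam0 := by
      intro x hx
      have hx0 : (0:ℝ) < x := lt_trans hL hx
      have hcos : HasDerivAt (fun t => Real.cos (Real.sqrt lam0 * t + θ0 / 2))
          (-Real.sin (Real.sqrt lam0 * x + θ0 / 2) * Real.sqrt lam0) x := by
        have h1 : HasDerivAt (fun t : ℝ => Real.sqrt lam0 * t + θ0 / 2) (Real.sqrt lam0) x := by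
          simpa using ((hasDerivAt_id x).const_mul (Real.sqrt lam0)).add_const (θ0 / 2)
        simpa using h1.cos
      have hev : φ0 =ᶠ[nhds x] (fun t => Real.cos (Real.sqrt lam0 * t + θ0 / 2)) := by
        filter_upwards [Ioi_mem_nhds hx] with t ht
        exact hφ0L t ht
      exact (φD x hx0).unique (hcos.congr_of_eventuallyEq hev)
    -- values at L by continuity from the right
    have hφLval : φ0 L = Real.cos (Real.sqrt lam0 * L + θ0 / 2) := by
      have h1 : ContinuousWithinAt φ0 (Ioi L) L :=
        (φcont L hL.le).mono (fun y hy => (hL.trans hy).le)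
      have h3 : Tendsto (fun t => Real.cos (Real.sqrt lam0 * t + θ0 / 2))
          (nhdsWithin L (Ioi L)) (nhds (φ0 L)) := by
        refine Tendsto.congr' ?_ h1
        filter_upwards [self_mem_nhdsWithin] with t ht
        exact hφ0L t ht
      have h4 : Tendsto (fun t => Real.cos (Real.sqrt lam0 * t + θ0 / 2))
          (nhdsWithin L (Ioi L)) (nhds (Real.cos (Real.sqrt lam0 * L + θ0 / 2))) := by
        have hc : Continuous fun t : ℝ => Real.cos (Real.sqrt lam0 * t + θ0 / 2) :=
          Real.continuous_cos.comp ((continuous_const.mul continuous_id).add continuous_const)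
        exact (hc.tendsto L).mono_left nhdsWithin_le_nhds
      exact tendsto_nhds_unique h3 h4
    have hφ'Lval : φ0' L = -Real.sin (Real.sqrt lam0 * L + θ0 / 2) * Real.sqrt lam0 := by
      have h1 : ContinuousWithinAt φ0' (Ioi L) L :=
        (hφ0c L hL.le).mono (fun y hy => (hL.trans hy).le)
      have h3 : Tendsto (fun t => -Real.sin (Real.sqrt lam0 * t + θ0 / 2) * Real.sqrt lam0)
          (nhdsWithin L (Ioi L)) (nhds (φ0' L)) := by
        refine Tendsto.congr' ?_ h1
        filter_upwards [self_mem_nhdsWithin] with t ht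
        exact hφ'val t ht
      have h4 : Tendsto (fun t => -Real.sin (Real.sqrt lam0 * t + θ0 / 2) * Real.sqrt lam0)
          (nhdsWithin L (Ioi L))
          (nhds (-Real.sin (Real.sqrt lam0 * L + θ0 / 2) * Real.sqrt lam0)) := by
        have hc : Continuous fun t : ℝ => -Real.sin (Real.sqrt lam0 * t + θ0 / 2) * Real.sqrt lam0 :=
          ((Real.continuous_sin.comp ((continuous_const.mul continuous_id).add
            continuous_const)).neg).mul continuous_const
        exact (hc.tendsto L).mono_left nhdsWithin_le_nhds
      exact tendsto_nhds_unique h3 h4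
    have hnv : lam0 * φ0 L ^ 2 + φ0' L ^ 2 = lam0 := by
      rw [hφLval, hφ'Lval]
      have hpy := Real.sin_sq_add_cos_sq (Real.sqrt lam0 * L + θ0 / 2)
      nlinarith [hpy, hsq]
    -- measurability and integrability of coefficients
    have hdmeas : Measurable d0 := measurable_of_continuousAt_compl_finite d0 Ed
      (fun x hx => (hd0smooth x hx).continuousAt)
    have hd_int : ∀ a b : ℝ, IntegrableOn (fun t => d0 t - lam0) (Ioc a b) volume := by
      intro a b
      haveI : IsFiniteMeasure (volume.restrict (Ioc a b)) :=
        ⟨by rw [Measure.restrict_apply_univ]; exact measure_Ioc_lt_top⟩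
      refine Integrable.mono' (integrable_const (Cd + |lam0|))
        ((hdmeas.sub measurable_const).aestronglyMeasurable) (ae_of_all _ fun x => ?_)
      rw [Real.norm_eq_abs]
      calc |d0 x - lam0| ≤ |d0 x| + |lam0| := abs_sub _ _
        _ ≤ Cd + |lam0| := add_le_add (hd0bdd x) le_rfl
    have hd_ii : ∀ a b : ℝ, IntervalIntegrable (fun t => d0 t - lam0) volume a b :=
      fun a b => ⟨hd_int a b, hd_int b a⟩
    set gg : ℝ → ℝ := fun t => if 0 < t then g0 t else 0 with hgg
    have hgg_eqOn : ∀ t, 0 < t → gg t = g0 t := by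
      intro t ht
      rw [hgg]
      exact if_pos ht
    have hgg_int : Integrable gg volume := by
      have h1 : IntegrableOn gg (Ioc 0 L) volume :=
        (hg_int L).congr_fun (fun t ht => (hgg_eqOn t ht.1).symm) measurableSet_Ioc
      have h2 : gg = (Ioc (0:ℝ) L).indicator gg := by
        funext t
        by_cases ht : t ∈ Ioc (0:ℝ) L
        · rw [indicator_of_mem ht]
        · rw [indicator_of_notMem ht, hgg]
          by_cases ht0 : 0 < t
          · have htL : L < t := by
              rw [mem_Ioc] at ht
              push_neg at ht
              exact ht ht0
            simp [ht0, hg0L t htL]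
          · simp [ht0]
      rw [h2]
      exact (integrable_indicator_iff measurableSet_Ioc).2 h1
    have hgg_ii : ∀ a b : ℝ, IntervalIntegrable gg volume a b :=
      fun a b => hgg_int.intervalIntegrable
    have hgg_meas : AEStronglyMeasurable gg (volume.restrict (Ioi 0)) := by
      refine hg0L2.aestronglyMeasurable.congr ?_
      filter_upwards [ae_restrict_mem measurableSet_Ioi] with t ht
      exact (hgg_eqOn t ht).symm
    -- primitives
    set D : ℝ → ℝ := fun x => ∫ t in (0:ℝ)..x, (d0 t - lam0) with hD
    set P : ℝ → ℝ := fun x => ∫ t in (0:ℝ)..x, gg t with hP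
    have hDc : Continuous D := intervalIntegral.continuous_primitive hd_ii 0
    have hPc : Continuous P := intervalIntegral.continuous_primitive hgg_ii 0
    have hD0 : D 0 = 0 := intervalIntegral.integral_same
    have hP0 : P 0 = 0 := intervalIntegral.integral_same
    have hDd : ∀ x ∉ (Ed : Set ℝ), HasDerivAt D (d0 x - lam0) x := by
      intro x hx
      exact intervalIntegral.integral_hasDerivAt_right (hd_ii 0 x)
        ((hdmeas.sub measurable_const).stronglyMeasurable.stronglyMeasurableAtFilter)
        (((hd0smooth x hx).continuousAt).sub continuousAt_const)
    have hPd : ∀ x, 0 < x → x ∉ (Eg : Set ℝ) → HasDerivAt P (g0 x) x := by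
      intro x hx hxE
      have h1 : ContinuousAt gg x := by
        refine (hg0cont x hxE).congr ?_
        filter_upwards [Ioi_mem_nhds hx] with t ht
        exact (hgg_eqOn t ht).symm
      have h2 : StronglyMeasurableAtFilter gg (nhds x) volume :=
        ⟨Ioi 0, Ioi_mem_nhds hx, hgg_meas⟩
      have h := intervalIntegral.integral_hasDerivAt_right (hgg_ii 0 x) h2 h1
      rw [hgg_eqOn x hx] at h
      exact h
    -- bound for D on [0, L]
    obtain ⟨m0, hm0⟩ := isCompact_Icc.exists_bound_of_continuousOn
      (hDc.continuousOn : ContinuousOn D (Icc 0 L))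
    set m : ℝ := max m0 0 with hm
    have hmnn : 0 ≤ m := le_max_right _ _
    have hmD : ∀ t ∈ Icc (0:ℝ) L, |D t| ≤ m := by
      intro t ht
      rw [← Real.norm_eq_abs]
      exact (hm0 t ht).trans (le_max_left _ _)
    -- the transformed first-order system
    obtain ⟨f, hf0, hfd⟩ : ∃ f : ℝ → ℝ × ℝ, f 0 = (0, 0) ∧ ∀ t ∈ Icc (0:ℝ) L,
        HasDerivWithinAt f ((f t).2 + D t * (f t).1 - P t,
          -D t * ((f t).2 + D t * (f t).1 - P t)) (Icc 0 L) t := by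
      set v : ℝ → ℝ × ℝ → ℝ × ℝ := fun t p =>
        (p.2 + D t * p.1 - P t, -D t * (p.2 + D t * p.1 - P t)) with hv
      have hlip : ∀ t ∈ Icc (0:ℝ) L, LipschitzWith ⟨(1+m)*(1+m), by positivity⟩ (v t) := by
        intro t ht
        refine LipschitzWith.of_dist_le_mul fun p q => ?_
        have hDm := hmD t ht
        have hp1 : |p.1 - q.1| ≤ dist p q := by
          rw [Prod.dist_eq, ← Real.dist_eq]; exact le_max_left _ _
        have hp2 : |p.2 - q.2| ≤ dist p q := by
          rw [Prod.dist_eq, ← Real.dist_eq]; exact le_max_right _ _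
        have hdnn : 0 ≤ dist p q := dist_nonneg
        have key1 : |(p.2 + D t * p.1 - P t) - (q.2 + D t * q.1 - P t)| ≤ (1+m) * dist p q := by
          have h1 : (p.2 + D t * p.1 - P t) - (q.2 + D t * q.1 - P t)
              = (p.2 - q.2) + D t * (p.1 - q.1) := by ring
          rw [h1]
          calc |(p.2 - q.2) + D t * (p.1 - q.1)| ≤ |p.2 - q.2| + |D t * (p.1 - q.1)| :=
                abs_add_le _ _
            _ = |p.2 - q.2| + |D t| * |p.1 - q.1| := by rw [abs_mul]
            _ ≤ dist p q + m * dist p q := by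
                refine add_le_add hp2 ?_
                exact mul_le_mul hDm hp1 (abs_nonneg _) hmnn
            _ = (1+m) * dist p q := by ring
        rw [Prod.dist_eq]
        rw [Real.dist_eq, Real.dist_eq]
        have hc1 : |(v t p).1 - (v t q).1| ≤ (1+m)*(1+m) * dist p q := by
          rw [hv]
          refine key1.trans ?_
          nlinarith [mul_nonneg hmnn hdnn, mul_nonneg (mul_nonneg hmnn hmnn) hdnn]
        have hc2 : |(v t p).2 - (v t q).2| ≤ (1+m)*(1+m) * dist p q := by
          rw [hv]
          have h1 : -D t * (p.2 + D t * p.1 - P t) - (-D t * (q.2 + D t * q.1 - P t))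
              = (-D t) * ((p.2 + D t * p.1 - P t) - (q.2 + D t * q.1 - P t)) := by ring
          simp only []
          rw [h1, abs_mul, abs_neg]
          calc |D t| * |(p.2 + D t * p.1 - P t) - (q.2 + D t * q.1 - P t)|
              ≤ m * ((1+m) * dist p q) :=
                mul_le_mul hDm key1 (abs_nonneg _) hmnn
            _ ≤ (1+m)*(1+m) * dist p q := by nlinarith [mul_nonneg hmnn hdnn]
        have := max_le hc1 hc2
        exact this
      have hcontv : ∀ p : ℝ × ℝ, ContinuousOn (fun t => v t p) (Icc 0 L) := by
        intro p
        apply Continuous.continuousOn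
        have h1 : Continuous fun t => p.2 + D t * p.1 - P t :=
          (continuous_const.add (hDc.mul continuous_const)).sub hPc
        exact h1.prodMk (hDc.neg.mul h1)
      exact exists_global_solution v 0 L hL.le _ hlip hcontv (0, 0)
    set Y : ℝ → ℝ := fun t => (f t).1 with hY
    set Z : ℝ → ℝ := fun t => (f t).2 with hZ
    set Y' : ℝ → ℝ := fun t => Z t + D t * Y t - P t with hY'
    have hfc : ContinuousOn f (Icc 0 L) := fun t ht => (hfd t ht).continuousWithinAt
    have hYc : ContinuousOn Y (Icc 0 L) := continuous_fst.comp_continuousOn hfc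
    have hZc : ContinuousOn Z (Icc 0 L) := continuous_snd.comp_continuousOn hfc
    have hY'c : ContinuousOn Y' (Icc 0 L) :=
      (hZc.add (hDc.continuousOn.mul hYc)).sub hPc.continuousOn
    have hYd : ∀ t ∈ Icc (0:ℝ) L, HasDerivWithinAt Y (Y' t) (Icc 0 L) t := by
      intro t ht
      have h := (ContinuousLinearMap.fst ℝ ℝ ℝ).hasFDerivAt.comp_hasDerivWithinAt t (hfd t ht)
      exact h
    have hZd : ∀ t ∈ Icc (0:ℝ) L, HasDerivWithinAt Z (-D t * Y' t) (Icc 0 L) t := by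
      intro t ht
      have h := (ContinuousLinearMap.snd ℝ ℝ ℝ).hasFDerivAt.comp_hasDerivWithinAt t (hfd t ht)
      exact h
    have hYdi : ∀ t ∈ Ioo (0:ℝ) L, HasDerivAt Y (Y' t) t := by
      intro t ht
      exact (hYd t (Ioo_subset_Icc_self ht)).hasDerivAt (Icc_mem_nhds ht.1 ht.2)
    have hZdi : ∀ t ∈ Ioo (0:ℝ) L, HasDerivAt Z (-D t * Y' t) t := by
      intro t ht
      exact (hZd t (Ioo_subset_Icc_self ht)).hasDerivAt (Icc_mem_nhds ht.1 ht.2)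
    have hY'd : ∀ t ∈ Ioo (0:ℝ) L, t ∉ (Ed : Set ℝ) → t ∉ (Eg : Set ℝ) →
        HasDerivAt Y' (d0 t * Y t - lam0 * Y t - g0 t) t := by
      intro t ht htd htg
      have h2 : HasDerivAt (fun u => D u * Y u) ((d0 t - lam0) * Y t + D t * Y' t) t :=
        (hDd t htd).mul (hYdi t ht)
      have h3 := ((hZdi t ht).add h2).sub (hPd t ht.1 htg)
      refine h3.congr_deriv ?_
      ring
    have hY0 : Y 0 = 0 := by rw [hY]; simp [hf0]
    have hZ0 : Z 0 = 0 := by rw [hZ]; simp [hf0]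
    have hY'0 : Y' 0 = 0 := by rw [hY']; simp [hY0, hZ0, hD0, hP0]
    clear_value Y' Z Y P D gg
    -- Wronskian vanishes at L
    have hWL : φ0 L * Y' L - φ0' L * Y L = 0 := by
      have hWc : ContinuousOn (fun x => φ0 x * Y' x - φ0' x * Y x) (Icc 0 L) := by
        exact ((φcont.mono Icc_subset_Ici_self).mul hY'c).sub
          ((hφ0c.mono Icc_subset_Ici_self).mul hYc)
      have hWd : ∀ t ∈ Ioo (0:ℝ) L, t ∉ ((Ed ∪ Eg : Finset ℝ) : Set ℝ) →
          HasDerivAt (fun x => φ0 x * Y' x - φ0' x * Y x) (-(φ0 t * g0 t)) t := by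
        intro t ht htE
        rw [Finset.coe_union, mem_union] at htE
        push_neg at htE
        have h1 := (φD t ht.1).mul (hY'd t ht htE.1 htE.2)
        have h2 := (hφ0eq t ht.1 htE.1).mul (hYdi t ht)
        have h := h1.sub h2
        refine h.congr_deriv ?_
        ring
      have hWint : IntervalIntegrable (fun t => -(φ0 t * g0 t)) volume 0 L :=
        (hφg_ii L hL.le).neg
      have hftcW := ftc_finset (Ed ∪ Eg) 0 L (fun x => φ0 x * Y' x - φ0' x * Y x)
        (fun t => -(φ0 t * g0 t)) hL.le hWc hWd hWint
      have hI : ∫ t in (0:ℝ)..L, -(φ0 t * g0 t) = 0 := by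
        rw [intervalIntegral.integral_neg, ← hbridge L le_rfl, horth, neg_zero]
      rw [hI] at hftcW
      have h00 : φ0 0 * Y' 0 - φ0' 0 * Y 0 = 0 := by rw [hY'0, hφ0bc]; ring
      have hftcW' : 0 = (φ0 L * Y' L - φ0' L * Y L) - (φ0 0 * Y' 0 - φ0' 0 * Y 0) := hftcW
      linarith [hftcW', h00]
    have hlamne : lam0 ≠ 0 := ne_of_gt hlam
    set α : ℝ := -(lam0 * Y L * φ0 L + Y' L * φ0' L) / lam0 with hα
    have h1α : Y L + α * φ0 L = 0 := by
      rw [hα]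
      field_simp
      linear_combination (-(φ0' L)) * hWL - Y L * hnv
    have h2α : Y' L + α * φ0' L = 0 := by
      rw [hα]
      field_simp
      linear_combination (lam0 * φ0 L) * hWL - Y' L * hnv
    -- the solution of the BVP
    set u : ℝ → ℝ := fun x => Y x + α * φ0 x with hu
    set u' : ℝ → ℝ := fun x => Y' x + α * φ0' x with hu'
    have huL : u L = 0 := h1α
    have hu'L : u' L = 0 := h2α
    have hud : ∀ x ∈ Icc (0:ℝ) L, HasDerivWithinAt u (u' x) (Icc 0 L) x := by
      intro x hx
      exact (hYd x hx).add (((hφ0 x hx.1).mono Icc_subset_Ici_self).const_mul α)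
    have huc : ContinuousOn u' (Icc 0 L) :=
      hY'c.add (continuousOn_const.mul (hφ0c.mono Icc_subset_Ici_self))
    set y0 : ℝ → ℝ := fun x => if x ≤ L then u x else 0 with hy0
    set y0' : ℝ → ℝ := fun x => if x ≤ L then u' x else 0 with hy0'
    have hy0u : ∀ x, x ≤ L → y0 x = u x := by intro x hx; rw [hy0]; exact if_pos hx
    have hy0u' : ∀ x, x ≤ L → y0' x = u' x := by intro x hx; rw [hy0']; exact if_pos hx
    have hy0z : ∀ x, L < x → y0 x = 0 := by intro x hx; rw [hy0]; exact if_neg (not_le.2 hx)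
    have hy0z' : ∀ x, L < x → y0' x = 0 := by intro x hx; rw [hy0']; exact if_neg (not_le.2 hx)
    have hy0Ici : ∀ x ∈ Ici L, y0 x = 0 := by
      intro x hx
      rcases eq_or_lt_of_le (mem_Ici.1 hx) with h | h
      · rw [hy0u x h.symm.le, ← h]; exact huL
      · exact hy0z x h
    have hy0'Ici : ∀ x ∈ Ici L, y0' x = 0 := by
      intro x hx
      rcases eq_or_lt_of_le (mem_Ici.1 hx) with h | h
      · rw [hy0u' x h.symm.le, ← h]; exact hu'L
      · exact hy0z' x h
    refine ⟨y0, y0', ?_, ?_, ⟨Ed ∪ Eg ∪ {L}, ?_⟩, ?_, ?_⟩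
    · -- differentiability on [0, ∞)
      intro x hx
      rcases lt_trichotomy x L with hxL | hxL | hxL
      · have h1 : HasDerivWithinAt u (u' x) (Icc 0 L) x := hud x ⟨hx, hxL.le⟩
        have hmem : Icc (0:ℝ) L ∈ nhdsWithin x (Ici 0) :=
          mem_nhdsWithin.2 ⟨Iio L, isOpen_Iio, hxL, fun y hy => ⟨hy.2, hy.1.le⟩⟩
        have h2 := h1.mono_of_mem_nhdsWithin hmem
        have hev : y0 =ᶠ[nhdsWithin x (Ici 0)] u := by
          filter_upwards [mem_nhdsWithin_of_mem_nhds (Iio_mem_nhds hxL)] with t ht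
          exact hy0u t (mem_Iio.1 ht).le
        rw [hy0u' x hxL.le]
        exact h2.congr_of_eventuallyEq hev (hy0u x hxL.le)
      · subst hxL
        have hleft : HasDerivWithinAt y0 0 (Icc 0 x) x := by
          have h1 := (hud x ⟨hx, le_rfl⟩).congr (fun t ht => hy0u t ht.2) (hy0u x le_rfl)
          rwa [hu'L] at h1
        have hright : HasDerivWithinAt y0 0 (Ici x) x := by
          exact (hasDerivWithinAt_const x _ 0).congr
            (fun t ht => hy0Ici t ht) (hy0Ici x self_mem_Ici)
        have h := hleft.union hright
        rw [Icc_union_Ici_eq_Ici hx] at h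
        rw [hy0u' x le_rfl, hu'L]
        exact h
      · have hev : y0 =ᶠ[nhdsWithin x (Ici 0)] (fun _ => 0) := by
          filter_upwards [mem_nhdsWithin_of_mem_nhds (Ioi_mem_nhds hxL)] with t ht
          exact hy0z t (mem_Ioi.1 ht)
        rw [hy0z' x hxL]
        exact (hasDerivWithinAt_const x _ 0).congr_of_eventuallyEq hev (hy0z x hxL)
    · -- continuity of y0'
      intro x hx
      rcases lt_trichotomy x L with hxL | hxL | hxL
      · have h1 : ContinuousWithinAt u' (Icc 0 L) x := huc x ⟨hx, hxL.le⟩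
        have hmem : Icc (0:ℝ) L ∈ nhdsWithin x (Ici 0) :=
          mem_nhdsWithin.2 ⟨Iio L, isOpen_Iio, hxL, fun y hy => ⟨hy.2, hy.1.le⟩⟩
        have h2 := h1.mono_of_mem_nhdsWithin hmem
        have hev : y0' =ᶠ[nhdsWithin x (Ici 0)] u' := by
          filter_upwards [mem_nhdsWithin_of_mem_nhds (Iio_mem_nhds hxL)] with t ht
          exact hy0u' t (mem_Iio.1 ht).le
        exact (h2.congr_of_eventuallyEq hev (hy0u' x hxL.le)).mono (fun y hy => hy)
      · subst hxL
        have hleft : ContinuousWithinAt y0' (Icc 0 x) x := by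
          refine ((huc x ⟨hx, le_rfl⟩).congr (fun t ht => hy0u' t ht.2) ?_)
          exact hy0u' x le_rfl
        have hright : ContinuousWithinAt y0' (Ici x) x := by
          exact (continuousWithinAt_const (b := (0:ℝ))).congr
            (fun t ht => hy0'Ici t ht) (hy0'Ici x self_mem_Ici)
        have h := hleft.union hright
        rw [Icc_union_Ici_eq_Ici hx] at h
        exact h.mono (fun y hy => hy)
      · have hev : y0' =ᶠ[nhdsWithin x (Ici 0)] (fun _ => 0) := by
          filter_upwards [mem_nhdsWithin_of_mem_nhds (Ioi_mem_nhds hxL)] with t ht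
          exact hy0z' t (mem_Ioi.1 ht)
        exact continuousWithinAt_const.congr_of_eventuallyEq hev (hy0z' x hxL)
    · -- the differential equation
      intro x hx hxE
      simp only [Finset.coe_union, Finset.coe_singleton, mem_union,
        mem_singleton_iff] at hxE
      push_neg at hxE
      obtain ⟨⟨hxd, hxg⟩, hxL⟩ := hxE
      have hx0 : (0:ℝ) < x := hx
      rcases Ne.lt_or_gt hxL with hlt | hgt
      · have h1 := hY'd x ⟨hx0, hlt⟩ hxd hxg
        have h2 := (hφ0eq x hx0 hxd).const_mul α
        have h3 := h1.add h2
        have hev : y0' =ᶠ[nhds x] u' := by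
          filter_upwards [Iio_mem_nhds hlt] with t ht
          exact hy0u' t (mem_Iio.1 ht).le
        have h4 := h3.congr_of_eventuallyEq hev
        rw [hy0u x hlt.le, hu]
        refine h4.congr_deriv ?_
        ring
      · have hev : y0' =ᶠ[nhds x] (fun _ => 0) := by
          filter_upwards [Ioi_mem_nhds hgt] with t ht
          exact hy0z' t (mem_Ioi.1 ht)
        have h1 := (hasDerivAt_const x (0:ℝ)).congr_of_eventuallyEq hev
        rw [hy0z x hgt, hg0L x hgt]
        simpa using h1
    · -- boundary condition at 0
      rw [hy0u' 0 hL.le, hu']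
      show Y' 0 + α * φ0' 0 = 0
      rw [hY'0, hφ0bc]
      ring
    · -- decay at infinity
      refine Tendsto.congr' ?_ tendsto_const_nhds
      filter_upwards [eventually_gt_atTop L] with t ht
      exact (hy0z t ht).symm

end
end

section
/- Lemma 5.1 (uniqueness and vanishing): The boundary value problem BVP(y0) has at most one solution; moreover, any solution y0 of BVP(y0) satisfies y0(x) = 0 for all x ≥ L. -/
open MeasureTheory Set Filter

noncomputable section

lemma monoOn_aux (E : Finset ℝ) :
    ∀ (a b : ℝ) (f f' : ℝ → ℝ), ContinuousOn f (Set.Icc a b) →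
    (∀ x ∈ Set.Ioo a b, x ∉ (E : Set ℝ) → HasDerivAt f (f' x) x) →
    (∀ x ∈ Set.Ioo a b, x ∉ (E : Set ℝ) → 0 ≤ f' x) →
    MonotoneOn f (Set.Icc a b) := by
  induction E using Finset.induction_on with
  | empty =>
    intro a b f f' hc hd hpos
    apply monotoneOn_of_hasDerivWithinAt_nonneg (convex_Icc a b) hc (f' := f')
    · intro x hx
      rw [interior_Icc] at hx ⊢
      exact (hd x hx (by simp)).hasDerivWithinAt
    · intro x hx
      rw [interior_Icc] at hx
      exact hpos x hx (by simp)
  | @insert c s hcs IH =>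
    intro a b f f' hc hd hpos
    by_cases hcab : c ∈ Set.Ioo a b
    · have h1 : MonotoneOn f (Set.Icc a c) := by
        refine IH a c f f' (hc.mono (Icc_subset_Icc le_rfl hcab.2.le)) ?_ ?_
        · intro x hx hxs
          refine hd x ⟨hx.1, hx.2.trans hcab.2⟩ ?_
          simp only [Finset.coe_insert, Set.mem_insert_iff, not_or]
          exact ⟨ne_of_lt hx.2, hxs⟩
        · intro x hx hxs
          refine hpos x ⟨hx.1, hx.2.trans hcab.2⟩ ?_
          simp only [Finset.coe_insert, Set.mem_insert_iff, not_or]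
          exact ⟨ne_of_lt hx.2, hxs⟩
      have h2 : MonotoneOn f (Set.Icc c b) := by
        refine IH c b f f' (hc.mono (Icc_subset_Icc hcab.1.le le_rfl)) ?_ ?_
        · intro x hx hxs
          refine hd x ⟨hcab.1.trans hx.1, hx.2⟩ ?_
          simp only [Finset.coe_insert, Set.mem_insert_iff, not_or]
          exact ⟨ne_of_gt hx.1, hxs⟩
        · intro x hx hxs
          refine hpos x ⟨hcab.1.trans hx.1, hx.2⟩ ?_
          simp only [Finset.coe_insert, Set.mem_insert_iff, not_or]
          exact ⟨ne_of_gt hx.1, hxs⟩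
      intro x hx y hy hxy
      rcases le_total y c with h | h
      · exact h1 ⟨hx.1, hxy.trans h⟩ ⟨hy.1, h⟩ hxy
      rcases le_total x c with h' | h'
      · exact (h1 ⟨hx.1, h'⟩ ⟨hcab.1.le, le_rfl⟩ h').trans
          (h2 ⟨le_rfl, hcab.2.le⟩ ⟨h, hy.2⟩ h)
      · exact h2 ⟨h', hx.2⟩ ⟨h'.trans hxy, hy.2⟩ hxy
    · refine IH a b f f' hc ?_ ?_
      · intro x hx hxs
        refine hd x hx ?_
        simp only [Finset.coe_insert, Set.mem_insert_iff, not_or]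
        exact ⟨fun h => hcab (h ▸ hx), hxs⟩
      · intro x hx hxs
        refine hpos x hx ?_
        simp only [Finset.coe_insert, Set.mem_insert_iff, not_or]
        exact ⟨fun h => hcab (h ▸ hx), hxs⟩

lemma sol_vanishes (L lam0 : ℝ) (hL : 0 < L) (hlam : lam0 ∈ Set.Ioo (0:ℝ) 1)
    (d0 g0 : ℝ → ℝ) (hd0L : ∀ x > L, d0 x = 0) (hg0L : ∀ x > L, g0 x = 0)
    (y y' : ℝ → ℝ) (hsol : IsSolBVP d0 lam0 g0 y y') :
    ∀ x ≥ L, y x = 0 ∧ y' x = 0 := by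
  obtain ⟨hy, hy'c, ⟨E, hode⟩, hy'0, hlim⟩ := hsol
  have hyc : ContinuousOn y (Set.Ici 0) := fun x hx => (hy x hx).continuousWithinAt
  have hyd : ∀ x : ℝ, 0 < x → HasDerivAt y (y' x) x := fun x hx =>
    (hy x hx.le).hasDerivAt (Ici_mem_nhds hx)
  have hode' : ∀ x : ℝ, L < x → x ∉ (E : Set ℝ) → HasDerivAt y' (-(lam0 * y x)) x := by
    intro x hx hxE
    have h2 : d0 x * y x - lam0 * y x - g0 x = -(lam0 * y x) := by
      rw [hd0L x hx, hg0L x hx]; ring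
    exact h2 ▸ hode x (Set.mem_Ioi.2 (hL.trans hx)) hxE
  set Eny : ℝ → ℝ := fun t => lam0 * (y t) ^ 2 + (y' t) ^ 2 with hEny
  have hEc : ContinuousOn Eny (Set.Ici 0) :=
    (continuousOn_const.mul (hyc.pow 2)).add (hy'c.pow 2)
  have hEd : ∀ x : ℝ, L < x → x ∉ (E : Set ℝ) → HasDerivAt Eny 0 x := by
    intro x hx hxE
    have h1 := hyd x (hL.trans hx)
    have h2 := hode' x hx hxE
    have h := ((h1.pow 2).const_mul lam0).add ((h2.pow 2))
    refine h.congr_deriv ?_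
    ring
  have hIcc0 : ∀ b : ℝ, Set.Icc L b ⊆ Set.Ici (0:ℝ) := fun b t ht => hL.le.trans ht.1
  have hEconst : ∀ x ≥ L, Eny x = Eny L := by
    intro x hx
    have hm1 := monoOn_aux E L x Eny (fun _ => 0) (hEc.mono (hIcc0 x))
      (fun t ht htE => hEd t ht.1 htE) (fun _ _ _ => le_rfl)
    have hm2 := monoOn_aux E L x (fun t => -Eny t) (fun _ => 0)
      ((hEc.mono (hIcc0 x)).neg)
      (fun t ht htE => by have h := (hEd t ht.1 htE).neg; rw [neg_zero] at h; exact h) (fun _ _ _ => le_rfl)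
    have e1 : Eny L ≤ Eny x := hm1 ⟨le_rfl, hx⟩ ⟨hx, le_rfl⟩ hx
    have e2 : -Eny L ≤ -Eny x := hm2 ⟨le_rfl, hx⟩ ⟨hx, le_rfl⟩ hx
    linarith
  obtain ⟨c, hcE⟩ : ∃ c, ∀ x ≥ L, lam0 * (y x) ^ 2 + (y' x) ^ 2 = c := ⟨Eny L, hEconst⟩
  have hc0 : 0 ≤ c := by
    rw [← hcE L le_rfl]
    exact add_nonneg (mul_nonneg hlam.1.le (sq_nonneg _)) (sq_nonneg _)
  have hceq : c = 0 := by
    by_contra hne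
    have hcpos : 0 < c := lt_of_le_of_ne hc0 (Ne.symm hne)
    -- eventually lam0 * y² < c/4
    have hy2 : Tendsto (fun x => lam0 * (y x) ^ 2) atTop (nhds 0) := by
      simpa using ((hlim.pow 2).const_mul lam0)
    have hev : ∀ᶠ x in atTop, lam0 * (y x) ^ 2 < c / 4 :=
      hy2.eventually_lt_const (by linarith)
    obtain ⟨M0, hM0⟩ := eventually_atTop.1 hev
    set M := max M0 L with hM
    have hML : L ≤ M := le_max_right _ _
    -- |y'| ≤ sqrt c on [L,∞)
    have hy'bd : ∀ x ≥ L, |y' x| ≤ Real.sqrt c := by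
      intro x hx
      have h1 : (y' x) ^ 2 ≤ c := by
        have := hcE x hx
        nlinarith [mul_nonneg hlam.1.le (sq_nonneg (y x))]
      calc |y' x| = Real.sqrt ((y' x) ^ 2) := by
            rw [Real.sqrt_sq_eq_abs]
        _ ≤ Real.sqrt c := Real.sqrt_le_sqrt h1
    -- y * y' → 0
    have hprod : Tendsto (fun x => y x * y' x) atTop (nhds 0) := by
      apply squeeze_zero_norm' (a := fun x => Real.sqrt c * |y x|)
      · filter_upwards [eventually_ge_atTop L] with x hx
        rw [Real.norm_eq_abs, abs_mul]
        calc |y x| * |y' x| ≤ |y x| * Real.sqrt c :=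
              mul_le_mul_of_nonneg_left (hy'bd x hx) (abs_nonneg _)
          _ = Real.sqrt c * |y x| := by ring
      · simpa using ((hlim.abs).const_mul (Real.sqrt c))
    -- Gf monotone growth
    set Gf : ℝ → ℝ := fun t => y t * y' t - c / 2 * t with hGf
    have hGc : ContinuousOn Gf (Set.Ici 0) :=
      (hyc.mul hy'c).sub ((continuous_const.mul continuous_id).continuousOn)
    have hGd : ∀ x : ℝ, M < x → x ∉ (E : Set ℝ) →
        HasDerivAt Gf ((y' x) ^ 2 - lam0 * (y x) ^ 2 - c / 2) x := by
      intro x hx hxE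
      have hxL : L < x := lt_of_le_of_lt hML hx
      have h1 := (hyd x (hL.trans hxL)).mul (hode' x hxL hxE)
      have h2 : HasDerivAt (fun t : ℝ => c / 2 * t) (c / 2) x := by
        simpa using (hasDerivAt_id x).const_mul (c / 2)
      have h := h1.sub h2
      refine h.congr_deriv ?_
      have hEx : lam0 * (y x) ^ 2 + (y' x) ^ 2 = c := hcE x hxL.le
      nlinarith [hEx]
    have hGpos : ∀ x : ℝ, M < x → x ∉ (E : Set ℝ) →
        0 ≤ (y' x) ^ 2 - lam0 * (y x) ^ 2 - c / 2 := by
      intro x hx hxE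
      have hxL : L < x := lt_of_le_of_lt hML hx
      have hEx : lam0 * (y x) ^ 2 + (y' x) ^ 2 = c := hcE x hxL.le
      have hsm := hM0 x (le_of_lt (lt_of_le_of_lt (le_max_left M0 L) hx))
      linarith
    have hlow : ∀ b ≥ M, y M * y' M + c / 2 * (b - M) ≤ y b * y' b := by
      intro b hb
      have hmono := monoOn_aux E M b Gf
        (fun x => (y' x) ^ 2 - lam0 * (y x) ^ 2 - c / 2)
        (hGc.mono (fun t ht => (le_trans hL.le (hML.trans ht.1) : (0:ℝ) ≤ t)))
        (fun x hx hxE => hGd x hx.1 hxE) (fun x hx hxE => hGpos x hx.1 hxE)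
      have := hmono ⟨le_rfl, hb⟩ ⟨hb, le_rfl⟩ hb
      simp only [hGf] at this
      linarith
    -- contradiction
    have h1 : ∀ᶠ b in atTop, |y b * y' b| < 1 :=
      (hprod.abs).eventually_lt_const (by norm_num)
    have h2 : ∀ᶠ b in atTop, (1:ℝ) ≤ y b * y' b := by
      set K0 := y M * y' M with hK0
      filter_upwards [eventually_ge_atTop M,
        eventually_ge_atTop (M + 2 * (1 + |K0|) / c)] with b hb1 hb2
      have habs : c / 2 * (b - M) ≥ 1 + |K0| := by
        have : b - M ≥ 2 * (1 + |K0|) / c := by linarith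
        calc c / 2 * (b - M) ≥ c / 2 * (2 * (1 + |K0|) / c) :=
              mul_le_mul_of_nonneg_left this (by linarith)
          _ = 1 + |K0| := by field_simp
      have := hlow b hb1
      have hK0abs : -|K0| ≤ K0 := neg_abs_le K0
      linarith
    obtain ⟨b, hb1, hb2⟩ := (h1.and h2).exists
    have := le_abs_self (y b * y' b)
    linarith
  -- conclude
  intro x hx
  have hEx : lam0 * (y x) ^ 2 + (y' x) ^ 2 = 0 := by
    rw [hcE x hx, hceq]
  have hy0 : (y x) ^ 2 = 0 := by
    nlinarith [sq_nonneg (y x), sq_nonneg (y' x), hlam.1]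
  have hy'0' : (y' x) ^ 2 = 0 := by nlinarith [mul_nonneg hlam.1.le (sq_nonneg (y x)), sq_nonneg (y' x)]
  exact ⟨pow_eq_zero_iff (n := 2) (by norm_num) |>.1 hy0,
    pow_eq_zero_iff (n := 2) (by norm_num) |>.1 hy'0'⟩

lemma sol_unique (L lam0 : ℝ) (hL : 0 < L) (hlam : lam0 ∈ Set.Ioo (0:ℝ) 1)
    (d0 g0 : ℝ → ℝ) (hd0L : ∀ x > L, d0 x = 0) (hg0L : ∀ x > L, g0 x = 0)
    (Cd : ℝ) (hd0bdd : ∀ x, |d0 x| ≤ Cd)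
    (y y' z z' : ℝ → ℝ) (hsy : IsSolBVP d0 lam0 g0 y y') (hsz : IsSolBVP d0 lam0 g0 z z') :
    ∀ x ∈ Set.Ici (0:ℝ), y x = z x := by
  have hvy := sol_vanishes L lam0 hL hlam d0 g0 hd0L hg0L y y' hsy
  have hvz := sol_vanishes L lam0 hL hlam d0 g0 hd0L hg0L z z' hsz
  obtain ⟨hy, hy'c, ⟨E1, hodey⟩, hy'0, hylim⟩ := hsy
  obtain ⟨hz, hz'c, ⟨E2, hodez⟩, hz'0, hzlim⟩ := hsz
  set w : ℝ → ℝ := fun t => y t - z t with hw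
  set w' : ℝ → ℝ := fun t => y' t - z' t with hw'
  have hyc : ContinuousOn y (Set.Ici 0) := fun x hx => (hy x hx).continuousWithinAt
  have hzc : ContinuousOn z (Set.Ici 0) := fun x hx => (hz x hx).continuousWithinAt
  have hwc : ContinuousOn w (Set.Ici 0) := hyc.sub hzc
  have hw'c : ContinuousOn w' (Set.Ici 0) := hy'c.sub hz'c
  have hwd : ∀ t : ℝ, 0 < t → HasDerivAt w (w' t) t := fun t ht =>
    ((hy t ht.le).hasDerivAt (Ici_mem_nhds ht)).sub ((hz t ht.le).hasDerivAt (Ici_mem_nhds ht))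
  have hwode : ∀ t : ℝ, 0 < t → t ∉ ((E1 ∪ E2 : Finset ℝ) : Set ℝ) →
      HasDerivAt w' ((d0 t - lam0) * w t) t := by
    intro t ht htE
    simp only [Finset.coe_union, Set.mem_union, not_or] at htE
    have h1 := hodey t (Set.mem_Ioi.2 ht) htE.1
    have h2 := hodez t (Set.mem_Ioi.2 ht) htE.2
    have h := h1.sub h2
    refine h.congr_deriv ?_
    simp only [hw]
    ring
  have hCd : 0 ≤ Cd := (abs_nonneg _).trans (hd0bdd 0)
  set K := Cd + 2 with hK
  set Hf : ℝ → ℝ := fun t => Real.exp (K * t) * ((w t) ^ 2 + (w' t) ^ 2) with hHf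
  have hHc : ContinuousOn Hf (Set.Icc 0 L) := by
    apply ContinuousOn.mul
    · exact (Real.continuous_exp.comp (continuous_const.mul continuous_id)).continuousOn
    · exact (((hwc.pow 2).add (hw'c.pow 2)).mono (fun t ht => ht.1))
  have hHd : ∀ t ∈ Set.Ioo (0:ℝ) L, t ∉ ((E1 ∪ E2 : Finset ℝ) : Set ℝ) →
      HasDerivAt Hf (Real.exp (K * t) *
        (K * ((w t) ^ 2 + (w' t) ^ 2) + 2 * w t * w' t * (1 + d0 t - lam0))) t := by
    intro t ht htE
    have hexp : HasDerivAt (fun u : ℝ => Real.exp (K * u)) (Real.exp (K * t) * K) t := by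
      simpa using (HasDerivAt.exp ((hasDerivAt_id t).const_mul K))
    have hF : HasDerivAt (fun u => (w u) ^ 2 + (w' u) ^ 2)
        (2 * w t ^ 1 * w' t + 2 * w' t ^ 1 * ((d0 t - lam0) * w t)) t :=
      ((hwd t ht.1).pow 2).add ((hwode t ht.1 htE).pow 2)
    have h := hexp.mul hF
    refine h.congr_deriv ?_
    ring
  have hHpos : ∀ t ∈ Set.Ioo (0:ℝ) L, t ∉ ((E1 ∪ E2 : Finset ℝ) : Set ℝ) →
      0 ≤ Real.exp (K * t) *
        (K * ((w t) ^ 2 + (w' t) ^ 2) + 2 * w t * w' t * (1 + d0 t - lam0)) := by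
    intro t _ _
    apply mul_nonneg (Real.exp_pos _).le
    have hd := abs_le.1 (hd0bdd t)
    have hu1 : 0 ≤ Cd + 1 - (1 + d0 t - lam0) := by linarith [hlam.1]
    have hu2 : 0 ≤ Cd + 1 + (1 + d0 t - lam0) := by linarith [hlam.2]
    nlinarith [mul_nonneg hu1 (sq_nonneg (w t - w' t)),
      mul_nonneg hu2 (sq_nonneg (w t + w' t)), sq_nonneg (w t), sq_nonneg (w' t)]
  have hmono := monoOn_aux (E1 ∪ E2) 0 L Hf
    (fun t => Real.exp (K * t) *
      (K * ((w t) ^ 2 + (w' t) ^ 2) + 2 * w t * w' t * (1 + d0 t - lam0)))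
    hHc hHd hHpos
  have hHL : Hf L = 0 := by
    simp only [hHf, hw, hw']
    rw [(hvy L le_rfl).1, (hvy L le_rfl).2, (hvz L le_rfl).1, (hvz L le_rfl).2]
    ring
  have hkey : ∀ x ∈ Set.Icc (0:ℝ) L, y x = z x := by
    intro x hx
    have h1 : Hf x ≤ 0 := hHL ▸ hmono hx ⟨hL.le, le_rfl⟩ hx.2
    have h2 : 0 ≤ (w x) ^ 2 + (w' x) ^ 2 := add_nonneg (sq_nonneg _) (sq_nonneg _)
    have h3 : 0 < Real.exp (K * x) := Real.exp_pos _
    have h4 : (w x) ^ 2 + (w' x) ^ 2 = 0 := by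
      by_contra hne
      have : 0 < (w x) ^ 2 + (w' x) ^ 2 := lt_of_le_of_ne h2 (Ne.symm hne)
      have : 0 < Hf x := mul_pos h3 this
      linarith
    have h5 : (w x) ^ 2 = 0 := by nlinarith [sq_nonneg (w x), sq_nonneg (w' x)]
    have h6 : w x = 0 := pow_eq_zero_iff (n := 2) (by norm_num) |>.1 h5
    simpa [hw, sub_eq_zero] using h6
  intro x hx
  rcases le_or_gt x L with h | h
  · exact hkey x ⟨hx, h⟩
  · rw [(hvy x h.le).1, (hvz x h.le).1]

/-- Lemma 5.1 (uniqueness and vanishing).  Let `g0 ∈ L²(0,∞)` be real with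
`g0(x) = 0` for `x > L`, let `d0` be real piecewise smooth with `d0(x) = 0` for
`x > L`, and let `λ0 ∈ (0,1)`.  Then the BVP `-y0'' + d0 y0 - λ0 y0 = g0`,
`y0'(0) = 0`, `y0 → 0` at `+∞` has at most one solution (on `[0,∞)`), and any
solution vanishes identically for `x ≥ L`. -/
theorem lemma_5_1_uniqueness_and_vanishing
    (L lam0 : ℝ) (hL : 0 < L) (hlam0 : lam0 ∈ Set.Ioo (0 : ℝ) 1)
    (d0 : ℝ → ℝ)
    (Ed : Finset ℝ)
    (hd0smooth : ∀ x ∉ (Ed : Set ℝ), ContDiffAt ℝ (⊤ : ℕ∞) d0 x)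
    (Cd : ℝ) (hd0bdd : ∀ x, |d0 x| ≤ Cd)
    (hd0L : ∀ x > L, d0 x = 0)
    (g0 : ℝ → ℝ)
    (hg0L2 : MeasureTheory.MemLp g0 2 (volume.restrict (Set.Ioi 0)))
    (hg0L : ∀ x > L, g0 x = 0)
    (Eg : Finset ℝ) (hg0cont : ∀ x ∉ (Eg : Set ℝ), ContinuousAt g0 x) :
    (∀ y y' z z' : ℝ → ℝ, IsSolBVP d0 lam0 g0 y y' → IsSolBVP d0 lam0 g0 z z' →
      ∀ x ∈ Set.Ici (0 : ℝ), y x = z x) ∧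
    (∀ y y' : ℝ → ℝ, IsSolBVP d0 lam0 g0 y y' → ∀ x ≥ L, y x = 0) := by
  constructor
  · intro y y' z z' hy hz
    exact sol_unique L lam0 hL hlam0 d0 g0 hd0L hg0L Cd hd0bdd y y' z z' hy hz
  · intro y y' hs x hx
    exact (sol_vanishes L lam0 hL hlam0 d0 g0 hd0L hg0L y y' hs x hx).1

end
end

section
/- Lemma 5.1 (a priori bound): There exists a constant C, depending only on d0, λ0 and L but independent of g0, such that whenever the boundary value problem BVP(y0) has a solution y0, it satisfies ‖y0‖_{H²} ≤ C‖g0‖. -/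
open MeasureTheory Set Filter

noncomputable section

/-- The L² norm `‖f‖ = (∫₀^∞ f²)^{1/2}` of a real function on `(0,∞)`. -/
def l2norm (f : ℝ → ℝ) : ℝ := Real.sqrt (∫ x in Set.Ioi (0 : ℝ), (f x) ^ 2)

/-- The H² norm `(‖f‖² + ‖f'‖² + ‖f''‖²)^{1/2}` of a real function on `(0,∞)`,
expressed in terms of `f`, its derivative `f'`, and the derivative of `f'`. -/
def h2norm (f f' : ℝ → ℝ) : ℝ :=
  Real.sqrt ((∫ x in Set.Ioi (0 : ℝ), (f x) ^ 2) +
    (∫ x in Set.Ioi (0 : ℝ), (f' x) ^ 2) +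
    (∫ x in Set.Ioi (0 : ℝ), (deriv f' x) ^ 2))

/-- If `f` is continuous on `[a,b]` and has nonnegative derivative at every interior point
outside a finite exceptional set, then `f a ≤ f b`. -/
lemma le_of_hasDerivAt_nonneg_except (s : Finset ℝ) :
    ∀ (a b : ℝ) (f f' : ℝ → ℝ), a ≤ b →
    ContinuousOn f (Set.Icc a b) →
    (∀ x ∈ Set.Ioo a b, x ∉ (s : Set ℝ) → HasDerivAt f (f' x) x) →
    (∀ x ∈ Set.Ioo a b, x ∉ (s : Set ℝ) → 0 ≤ f' x) →
    f a ≤ f b := by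
  classical
  induction s using Finset.induction_on with
  | empty =>
    intro a b f f' hab hc hd h0
    have hm : MonotoneOn f (Set.Icc a b) := by
      apply monotoneOn_of_hasDerivWithinAt_nonneg (convex_Icc a b) hc (f' := f')
      · intro x hx
        rw [interior_Icc] at hx
        exact (hd x hx (by simp)).hasDerivWithinAt
      · intro x hx
        rw [interior_Icc] at hx
        exact h0 x hx (by simp)
    exact hm (Set.left_mem_Icc.2 hab) (Set.right_mem_Icc.2 hab) hab
  | @insert c s hcs ih =>
    intro a b f f' hab hc hd h0
    by_cases hmem : c ∈ Set.Ioo a b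
    · have h1 : f a ≤ f c := by
        apply ih a c f f' hmem.1.le (hc.mono (Set.Icc_subset_Icc le_rfl hmem.2.le))
        · intro x hx hxs
          refine hd x ⟨hx.1, hx.2.trans hmem.2⟩ ?_
          simp only [Finset.coe_insert, Set.mem_insert_iff, not_or]
          exact ⟨ne_of_lt hx.2, hxs⟩
        · intro x hx hxs
          refine h0 x ⟨hx.1, hx.2.trans hmem.2⟩ ?_
          simp only [Finset.coe_insert, Set.mem_insert_iff, not_or]
          exact ⟨ne_of_lt hx.2, hxs⟩
      have h2 : f c ≤ f b := by
        apply ih c b f f' hmem.2.le (hc.mono (Set.Icc_subset_Icc hmem.1.le le_rfl))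
        · intro x hx hxs
          refine hd x ⟨hmem.1.trans hx.1, hx.2⟩ ?_
          simp only [Finset.coe_insert, Set.mem_insert_iff, not_or]
          exact ⟨(ne_of_gt hx.1), hxs⟩
        · intro x hx hxs
          refine h0 x ⟨hmem.1.trans hx.1, hx.2⟩ ?_
          simp only [Finset.coe_insert, Set.mem_insert_iff, not_or]
          exact ⟨(ne_of_gt hx.1), hxs⟩
      exact h1.trans h2
    · apply ih a b f f' hab hc
      · intro x hx hxs
        refine hd x hx ?_
        simp only [Finset.coe_insert, Set.mem_insert_iff, not_or]
        exact ⟨fun h => hmem (h ▸ hx), hxs⟩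
      · intro x hx hxs
        refine h0 x hx ?_
        simp only [Finset.coe_insert, Set.mem_insert_iff, not_or]
        exact ⟨fun h => hmem (h ▸ hx), hxs⟩

lemma eq_of_hasDerivAt_zero_except (s : Finset ℝ) (a b : ℝ) (f f' : ℝ → ℝ) (hab : a ≤ b)
    (hc : ContinuousOn f (Set.Icc a b))
    (hd : ∀ x ∈ Set.Ioo a b, x ∉ (s : Set ℝ) → HasDerivAt f (f' x) x)
    (h0 : ∀ x ∈ Set.Ioo a b, x ∉ (s : Set ℝ) → f' x = 0) : f b = f a := by
  have h1 := le_of_hasDerivAt_nonneg_except s a b f f' hab hc hd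
    (fun x hx hxs => (h0 x hx hxs).ge)
  have h2 := le_of_hasDerivAt_nonneg_except s a b (fun x => -f x) (fun x => -f' x) hab hc.neg
    (fun x hx hxs => (hd x hx hxs).neg)
    (fun x hx hxs => by simp [h0 x hx hxs])
  simp only [neg_le_neg_iff] at h2
  linarith

/-- A function whose derivative is everywhere at least `m > 0` on `[X,∞)` cannot tend to `0`. -/
lemma no_linear_escape {y y' : ℝ → ℝ} {X m : ℝ} (hm : 0 < m)
    (hcy' : ContinuousOn y' (Set.Ici X))
    (hdy : ∀ x ∈ Set.Ici X, HasDerivWithinAt y (y' x) (Set.Ici X) x)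
    (hlow : ∀ x ∈ Set.Ici X, m ≤ y' x)
    (hten : Filter.Tendsto y Filter.atTop (nhds 0)) : False := by
  have hcy : ContinuousOn y (Set.Ici X) := fun u hu => (hdy u hu).continuousWithinAt
  have key : ∀ x ∈ Set.Ici X, y X + m * (x - X) ≤ y x := by
    intro x hx
    have hXx : X ≤ x := hx
    have hFTC : ∫ t in X..x, y' t = y x - y X := by
      apply intervalIntegral.integral_eq_sub_of_hasDeriv_right
      · rw [Set.uIcc_of_le hXx]
        exact hcy.mono (Set.Icc_subset_Ici_self)
      · intro t ht
        rw [min_eq_left hXx, max_eq_right hXx] at ht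
        exact (hdy t (le_of_lt ht.1)).mono (fun z hz => le_of_lt (ht.1.trans hz))
      · apply ContinuousOn.intervalIntegrable
        rw [Set.uIcc_of_le hXx]
        exact hcy'.mono (Set.Icc_subset_Ici_self)
    have hmono : ∫ t in X..x, m ≤ ∫ t in X..x, y' t := by
      apply intervalIntegral.integral_mono_on hXx intervalIntegrable_const
      · apply ContinuousOn.intervalIntegrable
        rw [Set.uIcc_of_le hXx]
        exact hcy'.mono (Set.Icc_subset_Ici_self)
      · exact fun t ht => hlow t ht.1
    rw [intervalIntegral.integral_const, hFTC] at hmono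
    simp only [smul_eq_mul] at hmono
    linarith
  have hlin : Filter.Tendsto (fun x : ℝ => y X + m * (x - X)) Filter.atTop Filter.atTop := by
    apply Filter.tendsto_atTop_add_const_left
    apply Filter.Tendsto.const_mul_atTop hm
    exact tendsto_atTop_add_const_right _ _ tendsto_id
  have hyt : Filter.Tendsto y Filter.atTop Filter.atTop := by
    apply Filter.tendsto_atTop_mono' _ _ hlin
    filter_upwards [Filter.eventually_ge_atTop X] with x hx
    exact key x hx
  exact not_tendsto_nhds_of_tendsto_atTop hyt 0 hten






theorem stepA
    (L lam0 : ℝ) (hL : 0 < L) (hlam0 : lam0 ∈ Set.Ioo (0 : ℝ) 1)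
    (d0 : ℝ → ℝ) (hd0L : ∀ x > L, d0 x = 0)
    (g0 : ℝ → ℝ) (hg0L : ∀ x > L, g0 x = 0)
    (y y' : ℝ → ℝ)
    (hdy : ∀ x ∈ Set.Ici (0 : ℝ), HasDerivWithinAt y (y' x) (Set.Ici 0) x)
    (hcy' : ContinuousOn y' (Set.Ici 0))
    (E : Finset ℝ)
    (hE : ∀ x ∈ Set.Ioi (0 : ℝ), x ∉ (E : Set ℝ) →
      HasDerivAt y' (d0 x * y x - lam0 * y x - g0 x) x)
    (hyten : Filter.Tendsto y Filter.atTop (nhds 0)) :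
    ∀ x, L ≤ x → y x = 0 ∧ y' x = 0 := by
  have hcy : ContinuousOn y (Set.Ici 0) := fun u hu => (hdy u hu).continuousWithinAt
  have hEn : ∀ b, L ≤ b → lam0 * y b ^ 2 + y' b ^ 2 = lam0 * y L ^ 2 + y' L ^ 2 := by
    intro b hb
    apply eq_of_hasDerivAt_zero_except E L b
      (fun u => lam0 * y u ^ 2 + y' u ^ 2) (fun _ => (0:ℝ)) hb
    · have hsub : Set.Icc L b ⊆ Set.Ici 0 := fun z hz => le_trans hL.le hz.1
      exact (continuousOn_const.mul ((hcy.mono hsub).pow 2)).add ((hcy'.mono hsub).pow 2)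
    · intro x hx hxE
      have hxL : L < x := hx.1
      have hx0 : 0 < x := lt_trans hL hxL
      have hyx : HasDerivAt y (y' x) x := (hdy x hx0.le).hasDerivAt (Ici_mem_nhds hx0)
      have hy'x := hE x (Set.mem_Ioi.2 hx0) hxE
      rw [hd0L x hxL, hg0L x hxL] at hy'x
      have h := ((hyx.pow 2).const_mul lam0).add (hy'x.pow 2)
      refine h.congr_deriv ?_
      push_cast
      ring
    · intro x _ _; rfl
  have hc0 : lam0 * y L ^ 2 + y' L ^ 2 = 0 := by
    by_contra hne
    have hcnn : 0 ≤ lam0 * y L ^ 2 + y' L ^ 2 := by nlinarith [hlam0.1, sq_nonneg (y L), sq_nonneg (y' L)]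
    have hcpos : 0 < lam0 * y L ^ 2 + y' L ^ 2 := lt_of_le_of_ne hcnn (Ne.symm hne)
    set c := lam0 * y L ^ 2 + y' L ^ 2 with hcdef
    set m := Real.sqrt (c / 2) with hmdef
    have hmpos : 0 < m := Real.sqrt_pos.2 (by linarith)
    have hm2 : m ^ 2 = c / 2 := Real.sq_sqrt (by linarith)
    have hysq : Filter.Tendsto (fun x => lam0 * y x ^ 2) Filter.atTop (nhds 0) := by
      have h2 := (hyten.mul hyten).const_mul lam0
      simp only [mul_zero] at h2
      have heq : (fun x => lam0 * y x ^ 2) = fun x => lam0 * (y x * y x) := by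
        funext u; ring
      rw [heq]; exact h2
    have hev : ∀ᶠ x in Filter.atTop, lam0 * y x ^ 2 < c / 2 :=
      hysq.eventually_lt_const (by linarith)
    obtain ⟨X0, hX0⟩ := Filter.eventually_atTop.1 hev
    set X := max X0 L with hXdef
    have hXL : L ≤ X := le_max_right _ _
    have hsq : ∀ x, X ≤ x → c / 2 ≤ y' x ^ 2 := by
      intro x hx
      have h1 := hEn x (le_trans hXL hx)
      have h2 := hX0 x (le_trans (le_max_left _ _) hx)
      linarith
    have hne0 : ∀ x, X ≤ x → y' x ≠ 0 := by
      intro x hx h0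
      have := hsq x hx
      rw [h0] at this
      nlinarith
    have hIciX : Set.Ici X ⊆ Set.Ici (0:ℝ) := fun z hz => le_trans (le_trans hL.le hXL) hz
    have hcy'X : ContinuousOn y' (Set.Ici X) := hcy'.mono hIciX
    have hsign : ∀ x ∈ Set.Ici X, (0 < y' X → 0 < y' x) ∧ (y' X < 0 → y' x < 0) := by
      intro x hx
      constructor
      · intro hXpos
        by_contra hle
        push_neg at hle
        have hlt : y' x < 0 := lt_of_le_of_ne hle (hne0 x hx)
        obtain ⟨t, ht, h0⟩ := intermediate_value_uIcc
          (hcy'X.mono (by rw [Set.uIcc_of_le hx]; exact Set.Icc_subset_Ici_self))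
          (Set.mem_uIcc.2 (Or.inr ⟨hlt.le, hXpos.le⟩))
        rw [Set.uIcc_of_le hx] at ht
        exact hne0 t ht.1 h0
      · intro hXneg
        by_contra hle
        push_neg at hle
        have hlt : 0 < y' x := lt_of_le_of_ne hle (Ne.symm (hne0 x hx))
        obtain ⟨t, ht, h0⟩ := intermediate_value_uIcc
          (hcy'X.mono (by rw [Set.uIcc_of_le hx]; exact Set.Icc_subset_Ici_self))
          (Set.mem_uIcc.2 (Or.inl ⟨hXneg.le, hlt.le⟩))
        rw [Set.uIcc_of_le hx] at ht
        exact hne0 t ht.1 h0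
    rcases lt_or_gt_of_ne (hne0 X le_rfl) with hneg | hpos
    · -- y' < 0 on [X,∞): apply no_linear_escape to -y
      apply no_linear_escape (y := fun u => - y u) (y' := fun u => - y' u) hmpos hcy'X.neg
      · intro x hx
        exact ((hdy x (hIciX hx)).mono hIciX).neg
      · intro x hx
        have hylt : y' x < 0 := (hsign x hx).2 hneg
        have := hsq x hx
        nlinarith
      · simpa using hyten.neg
    · apply no_linear_escape (y := y) (y' := y') hmpos hcy'X
      · intro x hx
        exact (hdy x (hIciX hx)).mono hIciX
      · intro x hx
        have hylt : 0 < y' x := (hsign x hx).1 hpos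
        have := hsq x hx
        nlinarith
      · exact hyten
  intro x hx
  have h := hEn x hx
  rw [hc0] at h
  have hy2 : y x ^ 2 = 0 := by nlinarith [hlam0.1, sq_nonneg (y x), sq_nonneg (y' x)]
  have hy'2 : y' x ^ 2 = 0 := by nlinarith [hlam0.1, sq_nonneg (y x), sq_nonneg (y' x)]
  exact ⟨pow_eq_zero_iff two_ne_zero |>.1 hy2, pow_eq_zero_iff two_ne_zero |>.1 hy'2⟩



set_option maxHeartbeats 2000000 in
/-- Lemma 5.1 (a priori bound).  Let `d0` be real piecewise smooth with
`d0(x) = 0` for `x > L` and let `λ0 ∈ (0,1)`.  There exists a constant `C`,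
depending only on `d0`, `λ0` and `L` (in particular independent of `g0`), such
that whenever `g0 ∈ L²(0,∞)` vanishes for `x > L` and the BVP
`-y0'' + d0 y0 - λ0 y0 = g0`, `y0'(0) = 0`, `y0 → 0` at `+∞` has a solution
`y0`, one has `‖y0‖_{H²} ≤ C ‖g0‖`. -/
theorem lemma_5_1_apriori_bound
    (L lam0 : ℝ) (hL : 0 < L) (hlam0 : lam0 ∈ Set.Ioo (0 : ℝ) 1)
    (d0 : ℝ → ℝ)
    (Ed : Finset ℝ)
    (hd0smooth : ∀ x ∉ (Ed : Set ℝ), ContDiffAt ℝ (⊤ : ℕ∞) d0 x)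
    (Cd : ℝ) (hd0bdd : ∀ x, |d0 x| ≤ Cd)
    (hd0L : ∀ x > L, d0 x = 0) :
    ∃ C : ℝ, ∀ g0 : ℝ → ℝ,
      MeasureTheory.MemLp g0 2 (volume.restrict (Set.Ioi 0)) →
      (∀ x > L, g0 x = 0) →
      (∃ Eg : Finset ℝ, ∀ x ∉ (Eg : Set ℝ), ContinuousAt g0 x) →
      ∀ y0 y0' : ℝ → ℝ, IsSolBVP d0 lam0 g0 y0 y0' →
        h2norm y0 y0' ≤ C * l2norm g0 := by
  have hCd0 : 0 ≤ Cd := le_trans (abs_nonneg _) (hd0bdd 0)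
  refine ⟨Real.sqrt ((2*L + 2*(Cd+1)^2*L) * Real.exp ((Cd + 3) * L) + 2), ?_⟩
  intro g0 hg0mem hg0L hg0cont y y' hsol
  set eAL := Real.exp ((Cd + 3) * L) with heAL
  have heALpos : 0 < eAL := Real.exp_pos _
  obtain ⟨hdy, hcy', ⟨E, hE⟩, hy'0, hyten⟩ := hsol
  obtain ⟨Eg, hEg⟩ := hg0cont
  have hcy : ContinuousOn y (Set.Ici 0) := fun u hu => (hdy u hu).continuousWithinAt
  have hzero : ∀ x, L ≤ x → y x = 0 ∧ y' x = 0 :=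
    stepA L lam0 hL hlam0 d0 hd0L g0 hg0L y y' hdy hcy' E hE hyten
  -- integrability of g²
  have hg2int : IntegrableOn (fun t => g0 t ^ 2) (Set.Ioi 0) volume := hg0mem.integrable_sq
  set N2 := ∫ t in Set.Ioi (0:ℝ), g0 t ^ 2 with hN2def
  have hN2 : 0 ≤ N2 := setIntegral_nonneg measurableSet_Ioi (fun t _ => sq_nonneg _)
  set P := fun u : ℝ => ∫ t in (0:ℝ)..u, g0 t ^ 2 with hPdef
  have hEgopen : IsOpen ((Eg : Set ℝ))ᶜ := (Eg.finite_toSet.isClosed).isOpen_compl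
  have hg2cont : ContinuousOn (fun t => g0 t ^ 2) ((Eg : Set ℝ))ᶜ :=
    fun t ht => ((hEg t ht).pow 2).continuousWithinAt
  have hPderiv : ∀ x ∈ Set.Ioo (0:ℝ) L, x ∉ (Eg : Set ℝ) → HasDerivAt P (g0 x ^ 2) x := by
    intro x hx hxEg
    apply intervalIntegral.integral_hasDerivAt_right
    · rw [intervalIntegrable_iff_integrableOn_Ioc_of_le hx.1.le]
      exact hg2int.mono_set Set.Ioc_subset_Ioi_self
    · exact hg2cont.stronglyMeasurableAtFilter hEgopen x hxEg
    · exact (hEg x hxEg).pow 2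
  have hPcont : ContinuousOn P (Set.Icc 0 L) := by
    have h1 : IntegrableOn (fun t => g0 t ^ 2) (Set.uIcc 0 L) volume := by
      rw [Set.uIcc_of_le hL.le]
      rw [integrableOn_Icc_iff_integrableOn_Ioc]
      exact hg2int.mono_set Set.Ioc_subset_Ioi_self
    have := intervalIntegral.continuousOn_primitive_interval h1
    rwa [Set.uIcc_of_le hL.le] at this
  have hP0 : ∀ x ∈ Set.Icc (0:ℝ) L, 0 ≤ P x := fun x hx =>
    intervalIntegral.integral_nonneg hx.1 (fun t _ => sq_nonneg _)
  have hPL : P L ≤ N2 := by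
    show (∫ t in (0:ℝ)..L, g0 t ^ 2) ≤ N2
    rw [intervalIntegral.integral_of_le hL.le]
    exact setIntegral_mono_set hg2int (Filter.Eventually.of_forall fun t => sq_nonneg _)
      (HasSubset.Subset.eventuallyLE Set.Ioc_subset_Ioi_self)
  -- the monotone comparison function G
  set w := fun u : ℝ => y u ^ 2 + y' u ^ 2 with hwdef
  have hsub0L : Set.Icc (0:ℝ) L ⊆ Set.Ici 0 := fun z hz => hz.1
  have hwcont : ContinuousOn w (Set.Icc 0 L) :=
    ((hcy.mono hsub0L).pow 2).add ((hcy'.mono hsub0L).pow 2)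
  set G := fun u : ℝ => Real.exp ((Cd+3)*u) * w u + eAL * P u with hGdef
  set Gd := fun t : ℝ => Real.exp ((Cd+3)*t) *
      ((Cd+3) * w t + 2*y t*y' t + 2*y' t*(d0 t*y t - lam0*y t - g0 t)) + eAL * g0 t ^ 2
    with hGddef
  have hGcont : ContinuousOn G (Set.Icc 0 L) :=
    (((Real.continuous_exp.comp (continuous_const.mul continuous_id)).continuousOn).mul hwcont).add
      (continuousOn_const.mul hPcont)
  have hGderiv : ∀ t ∈ Set.Ioo (0:ℝ) L, t ∉ ((E ∪ Eg : Finset ℝ) : Set ℝ) →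
      HasDerivAt G (Gd t) t := by
    intro t ht htE
    simp only [Finset.coe_union, Set.mem_union, not_or] at htE
    obtain ⟨htE1, htE2⟩ := htE
    have hyx : HasDerivAt y (y' t) t := (hdy t ht.1.le).hasDerivAt (Ici_mem_nhds ht.1)
    have hy'x := hE t (Set.mem_Ioi.2 ht.1) htE1
    have hexp : HasDerivAt (fun u : ℝ => Real.exp ((Cd+3)*u)) (Real.exp ((Cd+3)*t) * ((Cd+3)*1)) t :=
      ((hasDerivAt_id t).const_mul (Cd+3)).exp
    have hw' : HasDerivAt w ((2:ℕ) * y t ^ 1 * y' t + (2:ℕ) * y' t ^ 1 * (d0 t * y t - lam0 * y t - g0 t)) t :=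
      (hyx.pow 2).add (hy'x.pow 2)
    have hP' := (hPderiv t ht htE2).const_mul eAL
    have h := (hexp.mul hw').add hP'
    rw [hGddef]
    refine h.congr_deriv ?_
    simp only [hwdef]
    push_cast
    ring
  have hGmono : ∀ x ∈ Set.Icc (0:ℝ) L, G x ≤ G L := by
    intro x hx
    apply le_of_hasDerivAt_nonneg_except (E ∪ Eg) x L G Gd hx.2
      (hGcont.mono (Set.Icc_subset_Icc hx.1 le_rfl))
    · intro t ht htE
      exact hGderiv t ⟨lt_of_le_of_lt hx.1 ht.1, ht.2⟩ htE
    · intro t ht htE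
      have habs := abs_le.1 (hd0bdd t)
      have heL : Real.exp ((Cd+3)*t) ≤ eAL := by
        rw [heAL]
        apply Real.exp_le_exp.2
        have ht2 : t ≤ L := ht.2.le
        nlinarith
      have hepos : (0:ℝ) < Real.exp ((Cd+3)*t) := Real.exp_pos _
      have hkey : 0 ≤ (Cd+3) * (y t ^ 2 + y' t ^ 2) + 2*y t*y' t + 2*y' t*(d0 t*y t - lam0*y t - g0 t) + g0 t ^ 2 := by
        nlinarith [mul_nonneg (by linarith [habs.1] : (0:ℝ) ≤ Cd + d0 t) (sq_nonneg (y t + y' t)),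
          mul_nonneg (by linarith [habs.2] : (0:ℝ) ≤ Cd - d0 t) (sq_nonneg (y t - y' t)),
          mul_nonneg hlam0.1.le (sq_nonneg (y t - y' t)),
          mul_nonneg (by linarith [hlam0.2] : (0:ℝ) ≤ 1 - lam0)
            (add_nonneg (sq_nonneg (y t)) (sq_nonneg (y' t))),
          sq_nonneg (y' t - g0 t), sq_nonneg (y t), sq_nonneg (y' t), sq_nonneg (y t + y' t)]
      simp only [hGddef, hwdef]
      nlinarith [mul_nonneg hepos.le hkey, mul_nonneg (sub_nonneg.2 heL) (sq_nonneg (g0 t))]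
  have hwL : w L = 0 := by
    have h := hzero L le_rfl
    simp [hwdef, h.1, h.2]
  have hwB : ∀ x ∈ Set.Icc (0:ℝ) L, w x ≤ eAL * N2 := by
    intro x hx
    have h1 := hGmono x hx
    rw [hGdef] at h1
    simp only [hwL, mul_zero, zero_add] at h1
    have h2 : (1:ℝ) ≤ Real.exp ((Cd+3)*x) := by
      apply Real.one_le_exp
      nlinarith [hx.1]
    have h3 : 0 ≤ w x := add_nonneg (sq_nonneg _) (sq_nonneg _)
    have h4 := hP0 x hx
    nlinarith [mul_le_mul_of_nonneg_left hPL heALpos.le,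
      mul_nonneg heALpos.le h4, mul_nonneg (sub_nonneg.2 h2) h3]
  have hyB : ∀ x, 0 ≤ x → y x ^ 2 ≤ eAL * N2 ∧ y' x ^ 2 ≤ eAL * N2 := by
    intro x hx0
    rcases le_or_gt x L with hxL | hxL
    · have h := hwB x ⟨hx0, hxL⟩
      simp only [hwdef] at h
      constructor <;> nlinarith [sq_nonneg (y x), sq_nonneg (y' x)]
    · have hz := hzero x hxL.le
      rw [hz.1, hz.2]
      constructor <;> nlinarith [mul_nonneg heALpos.le hN2]
  -- integral bounds for functions vanishing beyond L
  have hIbound : ∀ f : ℝ → ℝ, ContinuousOn f (Set.Ici 0) → (∀ x, L ≤ x → f x = 0) →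
      (∀ x, 0 ≤ x → f x ^ 2 ≤ eAL * N2) →
      IntegrableOn (fun x => f x ^ 2) (Set.Ioi 0) volume ∧
      (∫ x in Set.Ioi (0:ℝ), f x ^ 2) ≤ L * (eAL * N2) := by
    intro f hf hfL hfB
    have hint1 : IntegrableOn (fun x => f x ^ 2) (Set.Ioc 0 L) volume :=
      (((hf.mono hsub0L).pow 2).integrableOn_compact isCompact_Icc).mono_set
        Set.Ioc_subset_Icc_self
    have heq0 : Set.EqOn (fun x => f x ^ 2) 0 (Set.Ioi L) := fun x hx => by
      simp [hfL x (le_of_lt hx)]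
    have hint2 : IntegrableOn (fun x => f x ^ 2) (Set.Ioi L) volume :=
      (integrableOn_congr_fun heq0 measurableSet_Ioi).2 (integrableOn_zero)
    have hunion : Set.Ioc (0:ℝ) L ∪ Set.Ioi L = Set.Ioi (0:ℝ) := Set.Ioc_union_Ioi_eq_Ioi hL.le
    constructor
    · rw [← hunion]; exact hint1.union hint2
    · rw [← hunion, setIntegral_union (Set.Ioc_disjoint_Ioi le_rfl) measurableSet_Ioi hint1 hint2]
      have hzero2 : (∫ x in Set.Ioi L, f x ^ 2) = 0 :=
        setIntegral_eq_zero_of_forall_eq_zero (fun x hx => by simp [hfL x (le_of_lt hx)])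
      have hb1 : (∫ x in Set.Ioc (0:ℝ) L, f x ^ 2) ≤ ∫ _x in Set.Ioc (0:ℝ) L, eAL * N2 := by
        apply setIntegral_mono_on hint1 (integrableOn_const measure_Ioc_lt_top.ne)
          measurableSet_Ioc
        intro x hx
        exact hfB x hx.1.le
      rw [setIntegral_const, Real.volume_real_Ioc_of_le hL.le, smul_eq_mul] at hb1
      linarith
  obtain ⟨hy2int, hy2⟩ := hIbound y hcy (fun x hx => (hzero x hx).1) (fun x hx => (hyB x hx).1)
  obtain ⟨hy'2int, hy'2⟩ := hIbound y' hcy' (fun x hx => (hzero x hx).2) (fun x hx => (hyB x hx).2)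
  -- bound on the second derivative term
  have hD : (∫ x in Set.Ioi (0:ℝ), deriv y' x ^ 2) ≤ 2*(Cd+1)^2*(L*(eAL*N2)) + 2*N2 := by
    have hbnd : (∫ x in Set.Ioi (0:ℝ), deriv y' x ^ 2)
        ≤ ∫ x in Set.Ioi (0:ℝ), (2*(Cd+1)^2 * y x ^ 2 + 2 * g0 x ^ 2) := by
      apply integral_mono_of_nonneg (Filter.Eventually.of_forall fun x => sq_nonneg _)
      · exact (hy2int.const_mul (2*(Cd+1)^2)).add (hg2int.const_mul 2)
      · have hEnull : ∀ᵐ x ∂(volume.restrict (Set.Ioi (0:ℝ))), x ∉ (E : Set ℝ) := by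
          apply ae_restrict_of_ae
          exact (measure_eq_zero_iff_ae_notMem).1 (E.finite_toSet.measure_zero volume)
        filter_upwards [hEnull, ae_restrict_mem measurableSet_Ioi] with x hxE hx
        have hder : deriv y' x = d0 x * y x - lam0 * y x - g0 x := (hE x hx hxE).deriv
        rw [hder]
        have habs := abs_le.1 (hd0bdd x)
        nlinarith [mul_nonneg (mul_nonneg
            (by linarith [habs.1, hlam0.2] : (0:ℝ) ≤ Cd + 1 + (d0 x - lam0))
            (by linarith [habs.2, hlam0.1] : (0:ℝ) ≤ Cd + 1 - (d0 x - lam0)))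
          (sq_nonneg (y x)), sq_nonneg ((d0 x - lam0) * y x + g0 x)]
    have hsplit : (∫ x in Set.Ioi (0:ℝ), (2*(Cd+1)^2 * y x ^ 2 + 2 * g0 x ^ 2))
        = 2*(Cd+1)^2 * (∫ x in Set.Ioi (0:ℝ), y x ^ 2) + 2 * N2 := by
      rw [integral_add (hy2int.const_mul _) (hg2int.const_mul _),
        integral_const_mul, integral_const_mul]
    rw [hsplit] at hbnd
    have hmul : 2*(Cd+1)^2 * (∫ x in Set.Ioi (0:ℝ), y x ^ 2) ≤ 2*(Cd+1)^2*(L*(eAL*N2)) :=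
      mul_le_mul_of_nonneg_left hy2 (by positivity)
    linarith
  -- assemble
  unfold h2norm l2norm
  have hsum : (∫ x in Set.Ioi (0:ℝ), y x ^ 2) + (∫ x in Set.Ioi (0:ℝ), y' x ^ 2)
      + (∫ x in Set.Ioi (0:ℝ), deriv y' x ^ 2)
      ≤ ((2*L + 2*(Cd+1)^2*L) * eAL + 2) * N2 := by nlinarith
  have hfac : (0:ℝ) ≤ (2*L + 2*(Cd+1)^2*L) * eAL + 2 := by
    nlinarith [mul_nonneg (by nlinarith [sq_nonneg (Cd+1), hL.le] : (0:ℝ) ≤ 2*L+2*(Cd+1)^2*L) heALpos.le]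
  calc Real.sqrt ((∫ x in Set.Ioi (0:ℝ), y x ^ 2) + (∫ x in Set.Ioi (0:ℝ), y' x ^ 2)
        + (∫ x in Set.Ioi (0:ℝ), deriv y' x ^ 2))
      ≤ Real.sqrt (((2*L + 2*(Cd+1)^2*L) * eAL + 2) * N2) := Real.sqrt_le_sqrt hsum
    _ = Real.sqrt ((2*L + 2*(Cd+1)^2*L) * eAL + 2) * Real.sqrt N2 := Real.sqrt_mul hfac _

end
end

section
/- Define integer sequences (P_n) and (Q_n) by P_0 = P_1 = 1, P_k = P_{k−1} + Σ_{i=1}^{k−1} P_i(P_{k−i} + P_{k−i−1}) for k ≥ 2, and Q_0 = Q_1 = 1, Q_n = 3·Σ_{i=1}^{n−1} Q_i Q_{n−i} for n ≥ 2. Then (P_n) is nondecreasing, P_n ≤ 3·Σ_{i=1}^{n−1} P_i P_{n−i} for all n ≥ 2, and P_n ≤ Q_n for all n ≥ 0. -/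
/-- The integer sequences `P` and `Q` from the proof of Lemma 6.4:
`P_0 = P_1 = 1`, `P_k = P_{k-1} + Σ_{i=1}^{k-1} P_i (P_{k-i} + P_{k-i-1})` for `k ≥ 2`,
and `Q_0 = Q_1 = 1`, `Q_n = 3 Σ_{i=1}^{n-1} Q_i Q_{n-i}` for `n ≥ 2`.
Then `P` is nondecreasing, `P_n ≤ 3 Σ_{i=1}^{n-1} P_i P_{n-i}` for `n ≥ 2`,
and `P_n ≤ Q_n` for all `n`. -/
theorem P_monotone_and_le_Q
    (P Q : ℕ → ℕ)
    (hP0 : P 0 = 1) (hP1 : P 1 = 1)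
    (hPrec : ∀ k, 2 ≤ k →
      P k = P (k - 1) + ∑ i ∈ Finset.Icc 1 (k - 1), P i * (P (k - i) + P (k - i - 1)))
    (hQ0 : Q 0 = 1) (hQ1 : Q 1 = 1)
    (hQrec : ∀ n, 2 ≤ n → Q n = 3 * ∑ i ∈ Finset.Icc 1 (n - 1), Q i * Q (n - i)) :
    Monotone P ∧
    (∀ n, 2 ≤ n → P n ≤ 3 * ∑ i ∈ Finset.Icc 1 (n - 1), P i * P (n - i)) ∧
    (∀ n, P n ≤ Q n) := by
  have hmono : Monotone P := by
    apply monotone_nat_of_le_succ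
    intro n
    rcases Nat.eq_zero_or_pos n with h0 | h1
    · subst h0; rw [hP0, hP1]
    · have h2 : 2 ≤ n + 1 := by omega
      have := hPrec (n + 1) h2
      simp only [Nat.add_sub_cancel] at this
      omega
  have hbound : ∀ n, 2 ≤ n → P n ≤ 3 * ∑ i ∈ Finset.Icc 1 (n - 1), P i * P (n - i) := by
    intro n hn
    have hrec := hPrec n hn
    have hsum : (∑ i ∈ Finset.Icc 1 (n - 1), P i * (P (n - i) + P (n - i - 1)))
        ≤ 2 * ∑ i ∈ Finset.Icc 1 (n - 1), P i * P (n - i) := by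
      rw [Finset.mul_sum]
      apply Finset.sum_le_sum
      intro i _
      have : P (n - i - 1) ≤ P (n - i) := hmono (by omega)
      calc P i * (P (n - i) + P (n - i - 1)) ≤ P i * (P (n - i) + P (n - i))
            := Nat.mul_le_mul_left _ (by omega)
        _ = 2 * (P i * P (n - i)) := by ring
    have hfirst : P (n - 1) ≤ ∑ i ∈ Finset.Icc 1 (n - 1), P i * P (n - i) := by
      have hmem : n - 1 ∈ Finset.Icc 1 (n - 1) := by
        simp [Finset.mem_Icc]; omega
      have := Finset.single_le_sum (f := fun i => P i * P (n - i))
        (fun i _ => Nat.zero_le _) hmem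
      have heq : n - (n - 1) = 1 := by omega
      rw [heq, hP1, mul_one] at this
      exact this
    omega
  refine ⟨hmono, hbound, ?_⟩
  intro n
  induction n using Nat.strong_induction_on with
  | _ n ih =>
    match n, ih with
    | 0, _ => rw [hP0, hQ0]
    | 1, _ => rw [hP1, hQ1]
    | (m + 2), ih =>
      set n := m + 2
      have hn : 2 ≤ n := by omega
      calc P n ≤ 3 * ∑ i ∈ Finset.Icc 1 (n - 1), P i * P (n - i) := hbound n hn
        _ ≤ 3 * ∑ i ∈ Finset.Icc 1 (n - 1), Q i * Q (n - i) := by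
            apply Nat.mul_le_mul_left
            apply Finset.sum_le_sum
            intro i hi
            simp only [Finset.mem_Icc] at hi
            exact Nat.mul_le_mul (ih i (by omega)) (ih (n - i) (by omega))
        _ = Q n := (hQrec n hn).symm
end
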